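/- arXiv:2303.06301 — 6 statements merged into one kernel-verified Lean document; each statement's English description precedes it below -/
import Mathlib

section
/- If a finite simple graph G contains the octahedral graph O_t as a vertex-induced subgraph, then the number of maximal cliques of G is at least 2^t. -/
/-- A set of vertices is a maximal clique of `G`: it is a clique (pairwise adjacent)
and maximal under inclusion among cliques. -/
def IsMaximalClique {V : Type*} (G : SimpleGraph V) (s : Set V) : Prop :=
  G.IsClique s ∧ ∀ t : Set V, G.IsClique t → s ⊆ t → s = t

/-- The number of maximal cliques of `G`. -/
noncomputable def maxCliqueCount {V : Type*} (G : SimpleGraph V) : ℕ :=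
  {s : Set V | IsMaximalClique G s}.ncard

/-- `G` contains the octahedral graph `O_t` as a vertex-induced subgraph: there are `2t`
distinct vertices `v_0, …, v_{2t-1}` such that `v_i` and `v_j` (`i ≠ j`) are adjacent
iff `|i - j| ≠ t`. -/
def ContainsOct {V : Type*} (G : SimpleGraph V) (t : ℕ) : Prop :=
  ∃ f : Fin (2 * t) → V, Function.Injective f ∧
    ∀ i j : Fin (2 * t), i ≠ j →
      (G.Adj (f i) (f j) ↔ ¬ ((i : ℕ) + t = (j : ℕ) ∨ (j : ℕ) + t = (i : ℕ)))

/-!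
Split the vertices of the induced `O_t` into its `t` non-adjacent pairs. Choosing one vertex
from each pair gives a clique, hence a maximal clique containing it. Two different choices
differ on some pair, and no clique contains both vertices of a pair, so the `2^t` choices
yield `2^t` distinct maximal cliques.
-/

lemma isMaximalClique_iff_maximal {V : Type*} (G : SimpleGraph V) (s : Set V) :
    IsMaximalClique G s ↔ Maximal G.IsClique s := by
  rw [maximal_iff]
  rfl

lemma exists_isMaximalClique_superset {V : Type*} [Finite V] (G : SimpleGraph V) {s : Set V}
    (hs : G.IsClique s) : ∃ m, s ⊆ m ∧ IsMaximalClique G m := by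
  simpa only [isMaximalClique_iff_maximal] using Finite.exists_le_maximal hs

lemma card_le_maxCliqueCount {α V : Type*} [Finite V] (G : SimpleGraph V) (F : α → Set V)
    (hF : ∀ a, G.IsClique (F a)) (hsep : ∀ a b, a ≠ b → ¬ G.IsClique (F a ∪ F b)) :
    Nat.card α ≤ maxCliqueCount G := by
  choose M hFM hM using fun a => exists_isMaximalClique_superset G (hF a)
  have hinj : Function.Injective fun a => (⟨M a, hM a⟩ : {s : Set V // IsMaximalClique G s}) := by
    intro a b hab
    replace hab : M a = M b := congrArg Subtype.val hab
    by_contra hne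
    have hsub : F a ∪ F b ⊆ M a := Set.union_subset (hFM a) (hab ▸ hFM b)
    exact hsep a b hne ((hM a).1.subset hsub)
  exact (Nat.card_le_card_of_injective _ hinj).trans_eq (Nat.card_coe_set_eq _)

section Pairs

variable {ι V : Type*} (G : SimpleGraph V) (g : ι → Bool → V)

def choiceSet (σ : ι → Bool) : Set V :=
  Set.range fun i => g i (σ i)

lemma isClique_choiceSet (hadj : ∀ i j b c, i ≠ j → G.Adj (g i b) (g j c)) (σ : ι → Bool) :
    G.IsClique (choiceSet g σ) := by
  rintro _ ⟨i, rfl⟩ _ ⟨j, rfl⟩ hne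
  exact hadj i j _ _ fun hij => hne (hij ▸ rfl)

lemma not_isClique_union_choiceSet (hne : ∀ i, g i true ≠ g i false)
    (hnadj : ∀ i, ¬ G.Adj (g i true) (g i false)) {σ τ : ι → Bool} (hστ : σ ≠ τ) :
    ¬ G.IsClique (choiceSet g σ ∪ choiceSet g τ) := by
  intro hclique
  obtain ⟨i, hi⟩ := Function.ne_iff.mp hστ
  have hσ : g i (σ i) ∈ choiceSet g σ ∪ choiceSet g τ := .inl ⟨i, rfl⟩
  have hτ : g i (τ i) ∈ choiceSet g σ ∪ choiceSet g τ := .inr ⟨i, rfl⟩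
  cases hσi : σ i <;> cases hτi : τ i <;>
    simp only [hσi, hτi, ne_eq, not_true_eq_false] at hi hσ hτ
  · exact hnadj i (hclique hτ hσ (hne i))
  · exact hnadj i (hclique hσ hτ (hne i))

theorem two_pow_card_le_maxCliqueCount [Finite ι] [Finite V]
    (hne : ∀ i, g i true ≠ g i false) (hnadj : ∀ i, ¬ G.Adj (g i true) (g i false))
    (hadj : ∀ i j b c, i ≠ j → G.Adj (g i b) (g j c)) :
    2 ^ Nat.card ι ≤ maxCliqueCount G := by
  have h := card_le_maxCliqueCount G _ (isClique_choiceSet G g hadj)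
    fun _ _ => not_isClique_union_choiceSet G g hne hnadj
  rwa [Nat.card_fun, Nat.card_eq_fintype_card (α := Bool), Fintype.card_bool] at h

end Pairs

def octVertex {t : ℕ} (i : Fin t) (b : Bool) : Fin (2 * t) :=
  ⟨if b then i else i + t, by split <;> omega⟩

lemma ContainsOct.exists_pairs {V : Type*} {G : SimpleGraph V} {t : ℕ} (h : ContainsOct G t) :
    ∃ g : Fin t → Bool → V, (∀ i, g i true ≠ g i false) ∧
      (∀ i, ¬ G.Adj (g i true) (g i false)) ∧ ∀ i j b c, i ≠ j → G.Adj (g i b) (g j c) := by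
  obtain ⟨f, hf, hadj⟩ := h
  have hpair (i : Fin t) : octVertex i true ≠ octVertex i false := by
    simp [octVertex, Fin.ext_iff, i.pos.ne']
  refine ⟨fun i b => f (octVertex i b), fun i => hf.ne (hpair i), fun i => ?_, ?_⟩
  · rw [hadj _ _ (hpair i)]
    simp [octVertex]
  · intro i j b c hij
    have hij' : (i : ℕ) ≠ j := Fin.val_ne_of_ne hij
    have hv : octVertex i b ≠ octVertex j c := by
      cases b <;> cases c <;>
        simp only [octVertex, Bool.false_eq_true, ↓reduceIte, ne_eq, Fin.ext_iff] <;> omega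
    rw [hadj _ _ hv]
    cases b <;> cases c <;>
      simp only [octVertex, Bool.false_eq_true, ↓reduceIte, not_or] <;> omega

/-- If a finite simple graph contains `O_t` as a vertex-induced subgraph, then it has
at least `2^t` maximal cliques. -/
theorem octahedron_lower_bound_maximal_cliques {V : Type*} [Fintype V]
    (G : SimpleGraph V) (t : ℕ) (h : ContainsOct G t) :
    2 ^ t ≤ maxCliqueCount G := by
  obtain ⟨g, hne, hnadj, hadj⟩ := h.exists_pairs
  simpa using two_pow_card_le_maxCliqueCount G g hne hnadj hadj
end

section
/- Let r > 0 and let v_1, v_2, w_1, w_2 be points in the Euclidean plane such that dist(v_1,v_2) > r, dist(w_1,w_2) > r, and dist(v_1,w_1) ≤ r, dist(v_1,w_2) ≤ r, dist(v_2,w_1) ≤ r, dist(v_2,w_2) ≤ r. Then the closed segments [v_1,v_2] and [w_1,w_2] have a common point. -/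
/-!
Four points of the plane are affinely dependent, so by Radon's theorem either one of them lies in
the triangle spanned by the other three, or the four points pair up into two crossing segments.
The triangle spanned by three of the points lies in the closed ball of radius `r` about the one
of them paired with the fourth point (`v₁ ↔ v₂`, `w₁ ↔ w₂`), so the fourth point cannot lie in
it, as it is farther than `r` from its partner. If `[v₁, w₁]` crossed `[v₂, w₂]`, the triangle
inequality through the crossing point would give
`dist v₁ v₂ + dist w₁ w₂ ≤ dist v₁ w₁ + dist v₂ w₂ ≤ 2r`, and likewise for `[v₁, w₂]` and
`[v₂, w₁]`. The only pairing left is `[v₁, v₂]` against `[w₁, w₂]`.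
-/

noncomputable section

/-- Euclidean distance between two points of the plane `ℝ × ℝ`. -/
def eDist (p q : ℝ × ℝ) : ℝ :=
  Real.sqrt ((p.1 - q.1) ^ 2 + (p.2 - q.2) ^ 2)

open Module Metric Set

theorem not_affineIndependent_of_finrank_add_one_lt_card {k V ι : Type*} [DivisionRing k]
    [AddCommGroup V] [Module k V] [FiniteDimensional k V] [Fintype ι] {p : ι → V}
    (h : finrank k V + 1 < Fintype.card ι) : ¬AffineIndependent k p := fun hp =>
  (hp.card_le_finrank_succ.trans (Nat.add_le_add_right (Submodule.finrank_le _) 1)).not_gt h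

theorem fin_four_finset_cases_of_zero_mem (J : Finset (Fin 4)) (h0 : 0 ∈ J) :
    J = {0} ∧ Jᶜ = {1, 2, 3} ∨ J = {0, 1} ∧ Jᶜ = {2, 3} ∨ J = {0, 2} ∧ Jᶜ = {1, 3} ∨
      J = {0, 3} ∧ Jᶜ = {1, 2} ∨ J = {0, 1, 2} ∧ Jᶜ = {3} ∨ J = {0, 1, 3} ∧ Jᶜ = {2} ∨
      J = {0, 2, 3} ∧ Jᶜ = {1} ∨ Jᶜ = ∅ := by
  revert J; decide

theorem radon_four_points {𝕜 E : Type*} [Field 𝕜] [LinearOrder 𝕜] [IsStrictOrderedRing 𝕜]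
    [AddCommGroup E] [Module 𝕜 E] {a b c d : E} (h : ¬AffineIndependent 𝕜 ![a, b, c, d]) :
    a ∈ convexHull 𝕜 {b, c, d} ∨ b ∈ convexHull 𝕜 {a, c, d} ∨ c ∈ convexHull 𝕜 {a, b, d} ∨
      d ∈ convexHull 𝕜 {a, b, c} ∨ (segment 𝕜 a b ∩ segment 𝕜 c d).Nonempty ∨
      (segment 𝕜 a c ∩ segment 𝕜 b d).Nonempty ∨ (segment 𝕜 a d ∩ segment 𝕜 b c).Nonempty := by
  obtain ⟨I, p, hpI, hpIc⟩ := Convex.radon_partition h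
  wlog h0 : 0 ∈ I generalizing I
  · exact this Iᶜ hpIc (by rwa [compl_compl]) h0
  classical
  obtain ⟨J, rfl⟩ : ∃ J : Finset (Fin 4), I = J := ⟨I.toFinset, by simp⟩
  rw [← Finset.coe_compl] at hpIc
  rcases fin_four_finset_cases_of_zero_mem J h0 with
    ⟨rfl, hJ⟩ | ⟨rfl, hJ⟩ | ⟨rfl, hJ⟩ | ⟨rfl, hJ⟩ | ⟨rfl, hJ⟩ | ⟨rfl, hJ⟩ | ⟨rfl, hJ⟩ | hJ <;>
  simp only [hJ, Finset.coe_insert, Finset.coe_singleton, Finset.coe_empty, image_insert_eq,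
    image_singleton, image_empty, convexHull_pair, convexHull_singleton, convexHull_empty,
    mem_singleton_iff, Matrix.cons_val] at hpI hpIc
  · exact .inl (hpI ▸ hpIc)
  · exact .inr <| .inr <| .inr <| .inr <| .inl ⟨p, hpI, hpIc⟩
  · exact .inr <| .inr <| .inr <| .inr <| .inr <| .inl ⟨p, hpI, hpIc⟩
  · exact .inr <| .inr <| .inr <| .inr <| .inr <| .inr ⟨p, hpI, hpIc⟩
  · exact .inr <| .inr <| .inr <| .inl (hpIc ▸ hpI)
  · exact .inr <| .inr <| .inl (hpIc ▸ hpI)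
  · exact .inr <| .inl (hpIc ▸ hpI)
  · exact hpIc.elim

section Normed

variable {E : Type*} [SeminormedAddCommGroup E] [NormedSpace ℝ E]

theorem dist_add_dist_le_of_mem_segment_of_mem_segment {a b c d p : E}
    (hac : p ∈ segment ℝ a c) (hbd : p ∈ segment ℝ b d) :
    dist a b + dist c d ≤ dist a c + dist b d := by
  rw [← dist_add_dist_of_mem_segment hac, ← dist_add_dist_of_mem_segment hbd]
  linarith [dist_triangle a p b, dist_triangle c p d, dist_comm p b, dist_comm c p]

theorem segment_inter_nonempty_of_dist_le [FiniteDimensional ℝ E] (hE : finrank ℝ E ≤ 2)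
    {r : ℝ} {a b c d : E} (hab : r < dist a b) (hcd : r < dist c d)
    (hac : dist a c ≤ r) (had : dist a d ≤ r) (hbc : dist b c ≤ r) (hbd : dist b d ≤ r) :
    (segment ℝ a b ∩ segment ℝ c d).Nonempty := by
  have hr : 0 ≤ r := dist_nonneg.trans hac
  have hdep : ¬AffineIndependent ℝ ![a, b, c, d] :=
    not_affineIndependent_of_finrank_add_one_lt_card (by rw [Fintype.card_fin]; omega)
  have notMem_hull {x y : E} {s : Set E} (hxy : r < dist x y) (hs : s ⊆ closedBall y r) :
      x ∉ convexHull ℝ s := fun hx =>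
    (((convex_closedBall y r).convexHull_subset_iff.2 hs hx).trans_lt hxy).false
  rcases radon_four_points hdep with ha | hb | hc | hd | h | ⟨p, hpac, hpbd⟩ | ⟨p, hpad, hpbc⟩
  · exact absurd ha <| notMem_hull hab (by simp [insert_subset_iff, dist_comm, hr, hbc, hbd])
  · exact absurd hb <| notMem_hull (dist_comm a b ▸ hab)
      (by simp [insert_subset_iff, dist_comm, hr, hac, had])
  · exact absurd hc <| notMem_hull hcd (by simp [insert_subset_iff, hr, had, hbd])
  · exact absurd hd <| notMem_hull (dist_comm c d ▸ hcd)
      (by simp [insert_subset_iff, hr, hac, hbc])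
  · exact h
  · linarith [dist_add_dist_le_of_mem_segment_of_mem_segment hpac hpbd]
  · linarith [dist_add_dist_le_of_mem_segment_of_mem_segment hpad hpbc, dist_comm c d]

end Normed

theorem WithLp.ofLp_mem_segment {p : ENNReal} {V : Type*} [AddCommGroup V] [Module ℝ V]
    {x y : V} {z : WithLp p V} (hz : z ∈ segment ℝ (WithLp.toLp p x) (WithLp.toLp p y)) :
    z.ofLp ∈ segment ℝ x y := by
  obtain ⟨s, t, hs, ht, hst, rfl⟩ := hz
  exact ⟨s, t, hs, ht, hst, by simp⟩

theorem eDist_eq_dist_toLp (p q : ℝ × ℝ) :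
    eDist p q = dist (WithLp.toLp 2 p) (WithLp.toLp 2 q) := by
  simp [eDist, WithLp.prod_dist_eq_of_L2, Real.dist_eq, sq_abs]

theorem independent_segments_intersect_general (r : ℝ) (v₁ v₂ w₁ w₂ : ℝ × ℝ)
    (hv : r < eDist v₁ v₂) (hw : r < eDist w₁ w₂)
    (h11 : eDist v₁ w₁ ≤ r) (h12 : eDist v₁ w₂ ≤ r)
    (h21 : eDist v₂ w₁ ≤ r) (h22 : eDist v₂ w₂ ≤ r) :
    (segment ℝ v₁ v₂ ∩ segment ℝ w₁ w₂).Nonempty := by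
  simp only [eDist_eq_dist_toLp] at hv hw h11 h12 h21 h22
  have hE : finrank ℝ (WithLp 2 (ℝ × ℝ)) ≤ 2 := by
    simp [(WithLp.linearEquiv 2 ℝ (ℝ × ℝ)).finrank_eq]
  obtain ⟨z, hzv, hzw⟩ := segment_inter_nonempty_of_dist_le hE hv hw h11 h12 h21 h22
  exact ⟨z.ofLp, WithLp.ofLp_mem_segment hzv, WithLp.ofLp_mem_segment hzw⟩

/-- Two independent segments in the Euclidean plane intersect: if `dist(v₁,v₂) > r`,
`dist(w₁,w₂) > r`, and all four cross distances are at most `r`, then the closed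
segments `[v₁,v₂]` and `[w₁,w₂]` have a common point. -/
theorem independent_segments_intersect (r : ℝ) (hr : 0 < r) (v₁ v₂ w₁ w₂ : ℝ × ℝ)
    (hv : r < eDist v₁ v₂) (hw : r < eDist w₁ w₂)
    (h11 : eDist v₁ w₁ ≤ r) (h12 : eDist v₁ w₂ ≤ r)
    (h21 : eDist v₂ w₁ ≤ r) (h22 : eDist v₂ w₂ ≤ r) :
    (segment ℝ v₁ v₂ ∩ segment ℝ w₁ w₂).Nonempty :=
  independent_segments_intersect_general r v₁ v₂ w₁ w₂ hv hw h11 h12 h21 h22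

end
end

section
/- Let r > 0 and 0 ≤ θ_0 ≤ π/3. Let s = v_1v_2 and s' = w_1w_2 be independent segments in the Euclidean plane (so dist(v_1,v_2) > r, dist(w_1,w_2) > r, and all four cross distances are at most r), intersecting at a point q, with the counter-clockwise order of the four endpoints being v_1, w_1, v_2, w_2, and let the directed angle ∠(s,s') = ∠w_1 q v_1. Let m be the midpoint of v_1 and v_2 and let r_0 = dist(m, w_1). If ∠(s,s') ≤ θ_0, then (−1/2 + cos θ_0)·√(cos θ_0)·r ≤ r_0 ≤ (3/2 − cos θ_0)·r. -/
/-!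
Put `e = v₁ - v₂` and `k = cos θ₀ ≥ 1/2`. Since the angle at `q` is below `π/2`, `q` is interior to
both segments, so the angle condition transfers to `⟪w₁ - w₂, e⟫ ≥ k‖w₁ - w₂‖‖e‖` and
`⟪w₁ - q, e⟫ ≥ k‖w₁ - q‖‖e‖`.

Lower bound: the component of `w₁ - m` along `e / ‖e‖` equals
`⟪w₁ - w₂, e⟫/‖e‖ - ⟪v₁ - w₂, e⟫/‖e‖ + ‖e‖/2 ≥ k r - r + r/2`, and `(k - 1/2) r ≥ (k - 1/2) √k r`
because `√k ≤ 1`.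

Upper bound: `⟪w₁ - q, q - v₂⟫ ≥ 0` gives `‖w₁ - q‖ ≤ ‖w₁ - v₂‖ ≤ r`, so `w₁` lies within
`r √(1 - k²)` of the line `v₁v₂`. If `a` is the signed offset from `m` of the foot of `w₁` on that
line and `h` the squared distance to it, the two endpoints give `(|a| + ‖e‖/2)² + h ≤ r²`; together
with `h ≤ (1 - k²) r²` this yields `a² + h ≤ (5/4 - k) r² ≤ (3/2 - k)² r²`.
-/

noncomputable section

/-- The cross product (signed area) of two plane vectors. -/
def cross (u w : ℝ × ℝ) : ℝ := u.1 * w.2 - u.2 * w.1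

/-- The (undirected) angle `∠ a q b` at the vertex `q`. -/
def angAt (q a b : ℝ × ℝ) : ℝ :=
  Real.arccos (((a.1 - q.1) * (b.1 - q.1) + (a.2 - q.2) * (b.2 - q.2)) /
    (eDist q a * eDist q b))

open Real InnerProductGeometry RealInnerProductSpace Set

theorem sq_add_le_five_div_four_sub_mul_sq {r L a h k : ℝ} (hr : 0 ≤ r) (hL : r ≤ L)
    (h₁ : (a - L / 2) ^ 2 + h ≤ r ^ 2) (h₂ : (a + L / 2) ^ 2 + h ≤ r ^ 2)
    (hh : h ≤ (1 - k ^ 2) * r ^ 2) : a ^ 2 + h ≤ (5 / 4 - k) * r ^ 2 := by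
  have hend : (|a| + L / 2) ^ 2 + h ≤ r ^ 2 := by
    rcases abs_cases a with ⟨ha, -⟩ | ⟨ha, -⟩ <;> rw [ha]
    · exact h₂
    · linarith [show (-a + L / 2) ^ 2 = (a - L / 2) ^ 2 by ring]
  have hoffset : a ^ 2 + h ≤ 3 / 4 * r ^ 2 - |a| * r := by nlinarith [abs_nonneg a, sq_abs a]
  -- `hoffset` and `hh` cross at `|a| = (k - 1/2) r`.
  rcases le_or_gt ((k - 1 / 2) * r) |a| with hbig | hsmall
  · nlinarith
  · have : a ^ 2 ≤ ((k - 1 / 2) * r) ^ 2 := by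
      rw [← sq_abs]; exact pow_le_pow_left₀ (abs_nonneg a) hsmall.le 2
    nlinarith

section InnerProductSpace

variable {V : Type*} [NormedAddCommGroup V] [InnerProductSpace ℝ V]

theorem exists_sub_eq_smul_of_mem_segment {x y q : V} (h : q ∈ segment ℝ x y) :
    ∃ t ∈ Icc (0 : ℝ) 1, x - q = t • (x - y) ∧ q - y = (1 - t) • (x - y) := by
  obtain ⟨a, b, ha, hb, hab, rfl⟩ := h
  obtain rfl : a = 1 - b := by linarith
  exact ⟨b, ⟨hb, by linarith⟩, by module, by module⟩

-- `angle 0 y = π / 2` by convention.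
theorem ne_zero_of_angle_lt_pi_div_two {x y : V} (h : angle x y < π / 2) : x ≠ 0 ∧ y ≠ 0 := by
  constructor <;> rintro rfl <;> simp at h

theorem angle_le_of_mem_segment {x y q z : V} {θ : ℝ} (hq : q ∈ segment ℝ x y) (hθ : θ < π / 2)
    (h : angle z (x - q) ≤ θ) : angle z (x - y) ≤ θ := by
  obtain ⟨t, ⟨ht, -⟩, hxq, -⟩ := exists_sub_eq_smul_of_mem_segment hq
  have hxq0 := (ne_zero_of_angle_lt_pi_div_two (h.trans_lt hθ)).2
  rw [hxq] at h hxq0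
  have htpos : 0 < t := ht.lt_of_ne (Ne.symm (smul_ne_zero_iff.1 hxq0).1)
  rwa [angle_smul_right_of_pos _ _ htpos] at h

theorem cos_mul_le_inner_of_angle_le {x y : V} {θ : ℝ} (h : angle x y ≤ θ) (hθ : θ ≤ π) :
    cos θ * (‖x‖ * ‖y‖) ≤ ⟪x, y⟫ := by
  rw [← cos_angle_mul_norm_mul_norm]
  exact mul_le_mul_of_nonneg_right (cos_le_cos_of_nonneg_of_le_pi (angle_nonneg x y) hθ h)
    (by positivity)

theorem norm_le_norm_add_of_inner_nonneg {x y : V} (h : 0 ≤ ⟪x, y⟫) : ‖x‖ ≤ ‖x + y‖ := by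
  refine le_of_pow_le_pow_left₀ two_ne_zero (norm_nonneg _) ?_
  rw [norm_add_sq_real]
  nlinarith [sq_nonneg ‖y‖]

theorem norm_add_smul_sq_mul_sub_inner_sq (x e : V) (c : ℝ) :
    ‖x + c • e‖ ^ 2 * ‖e‖ ^ 2 - ⟪x + c • e, e⟫ ^ 2 = ‖x‖ ^ 2 * ‖e‖ ^ 2 - ⟪x, e⟫ ^ 2 := by
  rw [norm_add_sq_real, inner_add_left, real_inner_smul_left, real_inner_smul_right, norm_smul,
    real_inner_self_eq_norm_sq, mul_pow, norm_eq_abs, sq_abs]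
  ring

theorem le_norm_midpoint_sub {v₁ v₂ w₁ w₂ : V} {k : ℝ} (hv : v₁ ≠ v₂)
    (hk : k * (‖w₁ - w₂‖ * ‖v₁ - v₂‖) ≤ ⟪w₁ - w₂, v₁ - v₂⟫) :
    k * ‖w₁ - w₂‖ - ‖v₁ - w₂‖ + ‖v₁ - v₂‖ / 2 ≤ ‖midpoint ℝ v₁ v₂ - w₁‖ := by
  set e := v₁ - v₂
  have hL : 0 < ‖e‖ := norm_pos_iff.2 (sub_ne_zero.2 hv)
  have hsplit : w₁ - midpoint ℝ v₁ v₂ = (w₁ - w₂) - (v₁ - w₂) + (2⁻¹ : ℝ) • e := by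
    rw [← invOf_eq_inv, ← left_sub_midpoint]; abel
  have hinner : ⟪w₁ - midpoint ℝ v₁ v₂, e⟫ = ⟪w₁ - w₂, e⟫ - ⟪v₁ - w₂, e⟫ + ‖e‖ ^ 2 / 2 := by
    rw [hsplit, inner_add_left, inner_sub_left, real_inner_smul_left, real_inner_self_eq_norm_sq]
    ring
  rw [norm_sub_rev (midpoint ℝ v₁ v₂)]
  refine le_of_mul_le_mul_right ?_ hL
  nlinarith [real_inner_le_norm (v₁ - w₂) e, real_inner_le_norm (w₁ - midpoint ℝ v₁ v₂) e]

theorem norm_midpoint_sub_sq_le {v₁ v₂ w : V} {r k : ℝ} (hr : 0 < r) (hv : r ≤ ‖v₁ - v₂‖)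
    (h₁ : ‖v₁ - w‖ ≤ r) (h₂ : ‖v₂ - w‖ ≤ r)
    (hperp : ‖midpoint ℝ v₁ v₂ - w‖ ^ 2 * ‖v₁ - v₂‖ ^ 2 - ⟪midpoint ℝ v₁ v₂ - w, v₁ - v₂⟫ ^ 2
      ≤ (1 - k ^ 2) * r ^ 2 * ‖v₁ - v₂‖ ^ 2) :
    ‖midpoint ℝ v₁ v₂ - w‖ ^ 2 ≤ (5 / 4 - k) * r ^ 2 := by
  have hsplit₁ : v₁ - w = (midpoint ℝ v₁ v₂ - w) + (2⁻¹ : ℝ) • (v₁ - v₂) := by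
    rw [← invOf_eq_inv, ← left_sub_midpoint]; abel
  have hsplit₂ : v₂ - w = (midpoint ℝ v₁ v₂ - w) + (-2⁻¹ : ℝ) • (v₁ - v₂) := by
    rw [neg_smul, ← invOf_eq_inv, ← midpoint_sub_right]; abel
  set x := midpoint ℝ v₁ v₂ - w
  set e := v₁ - v₂
  have hL : 0 < ‖e‖ := hr.trans_le hv
  obtain ⟨a, hxe⟩ : ∃ a, ⟪x, e⟫ = a * ‖e‖ := ⟨_, (div_mul_cancel₀ _ hL.ne').symm⟩
  have hshift (c : ℝ) : ‖x + c • e‖ ^ 2 = (a + c * ‖e‖) ^ 2 + (‖x‖ ^ 2 - a ^ 2) := by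
    rw [norm_add_sq_real, real_inner_smul_right, norm_smul, norm_eq_abs, mul_pow, sq_abs, hxe]
    ring
  have h₁' := pow_le_pow_left₀ (norm_nonneg _) h₁ 2
  have h₂' := pow_le_pow_left₀ (norm_nonneg _) h₂ 2
  rw [hsplit₁, hshift] at h₁'
  rw [hsplit₂, hshift] at h₂'
  have hh : ‖x‖ ^ 2 - a ^ 2 ≤ (1 - k ^ 2) * r ^ 2 := by
    refine le_of_mul_le_mul_right ?_ (pow_pos hL 2)
    rw [hxe] at hperp
    linarith
  have := sq_add_le_five_div_four_sub_mul_sq (a := a) hr.le hv (h₂'.trans_eq' (by ring))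
    (h₁'.trans_eq' (by ring)) hh
  linarith

theorem norm_midpoint_sub_le_of_mem_segment {v₁ v₂ w q : V} {r k : ℝ} (hr : 0 < r)
    (hk : 0 ≤ k) (hk1 : k ≤ 1) (hv : r ≤ ‖v₁ - v₂‖) (h₁ : ‖v₁ - w‖ ≤ r) (h₂ : ‖v₂ - w‖ ≤ r)
    (hq : q ∈ segment ℝ v₁ v₂) (hwq : k * (‖w - q‖ * ‖v₁ - v₂‖) ≤ ⟪w - q, v₁ - v₂⟫) :
    ‖midpoint ℝ v₁ v₂ - w‖ ≤ (3 / 2 - k) * r := by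
  obtain ⟨t, ⟨-, ht1⟩, hvq, hqv⟩ := exists_sub_eq_smul_of_mem_segment hq
  have hcos_nonneg : 0 ≤ k * (‖w - q‖ * ‖v₁ - v₂‖) := mul_nonneg hk (by positivity)
  have hwq_le : ‖w - q‖ ≤ r := calc
    ‖w - q‖ ≤ ‖(w - q) + (q - v₂)‖ := norm_le_norm_add_of_inner_nonneg <| by
      rw [hqv, real_inner_smul_right]; exact mul_nonneg (by linarith) (hcos_nonneg.trans hwq)
    _ = ‖v₂ - w‖ := by rw [sub_add_sub_cancel, norm_sub_rev]
    _ ≤ r := h₂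
  have hperp : ‖midpoint ℝ v₁ v₂ - w‖ ^ 2 * ‖v₁ - v₂‖ ^ 2 - ⟪midpoint ℝ v₁ v₂ - w, v₁ - v₂⟫ ^ 2
      ≤ (1 - k ^ 2) * r ^ 2 * ‖v₁ - v₂‖ ^ 2 := by
    have hsplit : midpoint ℝ v₁ v₂ - w = (q - w) + (t - 2⁻¹) • (v₁ - v₂) := by
      rw [sub_smul, ← hvq, ← invOf_eq_inv, ← left_sub_midpoint]; abel
    rw [hsplit, norm_add_smul_sq_mul_sub_inner_sq, norm_sub_rev q, ← neg_sub w q, inner_neg_left,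
      neg_sq]
    have hcos_sq := pow_le_pow_left₀ hcos_nonneg hwq 2
    have hwq_sq := pow_le_pow_left₀ (norm_nonneg _) hwq_le 2
    nlinarith [mul_nonneg (mul_nonneg (by nlinarith : 0 ≤ 1 - k ^ 2) (sq_nonneg ‖v₁ - v₂‖))
      (sub_nonneg.2 hwq_sq)]
  refine le_of_pow_le_pow_left₀ two_ne_zero (by nlinarith) ?_
  calc ‖midpoint ℝ v₁ v₂ - w‖ ^ 2 ≤ (5 / 4 - k) * r ^ 2 := norm_midpoint_sub_sq_le hr hv h₁ h₂ hperp
    _ ≤ ((3 / 2 - k) * r) ^ 2 := by nlinarith [sq_nonneg ((1 - k) * r)]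

end InnerProductSpace

local notation "ι" => WithLp.toLp 2

theorem eDist_eq_norm_sub (p q : ℝ × ℝ) : eDist p q = ‖ι p - ι q‖ := by
  simp [eDist, WithLp.prod_norm_eq_of_L2]

theorem angAt_eq_angle (q a b : ℝ × ℝ) : angAt q a b = angle (ι a - ι q) (ι b - ι q) := by
  rw [angAt, angle, eDist_eq_norm_sub q a, eDist_eq_norm_sub q b, norm_sub_rev (ι q),
    norm_sub_rev (ι q), ← WithLp.toLp_sub, ← WithLp.toLp_sub]
  simp [mul_comm]

theorem toLp_midpoint (a b : ℝ × ℝ) : ι (midpoint ℝ a b) = midpoint ℝ (ι a) (ι b) :=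
  AffineMap.map_midpoint (WithLp.linearEquiv 2 ℝ (ℝ × ℝ)).symm.toLinearMap.toAffineMap a b

theorem toLp_mem_segment {a b q : ℝ × ℝ} (h : q ∈ segment ℝ a b) :
    ι q ∈ segment ℝ (ι a) (ι b) := by
  obtain ⟨s, t, hs, ht, hst, rfl⟩ := h
  exact ⟨s, t, hs, ht, hst, rfl⟩

theorem independent_segments_midpoint_distance_general (r θ₀ : ℝ) (hr : 0 < r)
    (hθ₀0 : 0 ≤ θ₀) (hθ₀1 : θ₀ ≤ Real.pi / 3)
    (v₁ v₂ w₁ w₂ q : ℝ × ℝ)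
    (hv : r < eDist v₁ v₂) (hw : r < eDist w₁ w₂)
    (h11 : eDist v₁ w₁ ≤ r) (h12 : eDist v₁ w₂ ≤ r)
    (h21 : eDist v₂ w₁ ≤ r)
    (hq₁ : q ∈ segment ℝ v₁ v₂) (hq₂ : q ∈ segment ℝ w₁ w₂)
    (hang : angAt q w₁ v₁ ≤ θ₀) :
    (-(1 / 2) + Real.cos θ₀) * Real.sqrt (Real.cos θ₀) * r
        ≤ eDist (midpoint ℝ v₁ v₂) w₁ ∧
      eDist (midpoint ℝ v₁ v₂) w₁ ≤ (3 / 2 - Real.cos θ₀) * r := by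
  have hk : 1 / 2 ≤ cos θ₀ := cos_pi_div_three ▸
    cos_le_cos_of_nonneg_of_le_pi hθ₀0 (by linarith [pi_pos]) hθ₀1
  have hθ₀ : θ₀ < π / 2 := by linarith [pi_pos]
  rw [angAt_eq_angle] at hang
  rw [eDist_eq_norm_sub] at hv hw h11 h12 h21 ⊢
  rw [toLp_midpoint]
  have hang₁ := angle_le_of_mem_segment (toLp_mem_segment hq₁) hθ₀ hang
  have hang₂ : angle (ι w₁ - ι w₂) (ι v₁ - ι v₂) ≤ θ₀ := by
    rw [angle_comm]; exact angle_le_of_mem_segment (toLp_mem_segment hq₂) hθ₀ (by rwa [angle_comm])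
  constructor
  · have hv₀ : ι v₁ ≠ ι v₂ := sub_ne_zero.1 (norm_pos_iff.1 (hr.trans hv))
    calc (-(1 / 2) + cos θ₀) * √(cos θ₀) * r ≤ (cos θ₀ - 1 / 2) * r := by
          refine mul_le_mul_of_nonneg_right ?_ hr.le
          nlinarith [sqrt_le_one.2 (cos_le_one θ₀), sqrt_nonneg (cos θ₀)]
      _ ≤ cos θ₀ * ‖ι w₁ - ι w₂‖ - ‖ι v₁ - ι w₂‖ + ‖ι v₁ - ι v₂‖ / 2 := by nlinarith
      _ ≤ _ := le_norm_midpoint_sub hv₀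
            (cos_mul_le_inner_of_angle_le hang₂ (by linarith))
  · exact norm_midpoint_sub_le_of_mem_segment hr (by linarith) (cos_le_one θ₀) hv.le h11 h21
      (toLp_mem_segment hq₁) (cos_mul_le_inner_of_angle_le hang₁ (by linarith))

/-- If two independent segments `v₁v₂`, `w₁w₂` intersect at `q`, with the four endpoints
in counter-clockwise order `v₁, w₁, v₂, w₂` around `q`, and the directed angle
`∠(s,s') = ∠ w₁ q v₁` is at most `θ₀ ≤ π/3`, then the distance `r₀` from the midpoint `m`
of `v₁v₂` to `w₁` satisfies `(−1/2 + cos θ₀)√(cos θ₀)·r ≤ r₀ ≤ (3/2 − cos θ₀)·r`. -/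
theorem independent_segments_midpoint_distance (r θ₀ : ℝ) (hr : 0 < r)
    (hθ₀0 : 0 ≤ θ₀) (hθ₀1 : θ₀ ≤ Real.pi / 3)
    (v₁ v₂ w₁ w₂ q : ℝ × ℝ)
    (hv : r < eDist v₁ v₂) (hw : r < eDist w₁ w₂)
    (h11 : eDist v₁ w₁ ≤ r) (h12 : eDist v₁ w₂ ≤ r)
    (h21 : eDist v₂ w₁ ≤ r) (h22 : eDist v₂ w₂ ≤ r)
    (hq₁ : q ∈ segment ℝ v₁ v₂) (hq₂ : q ∈ segment ℝ w₁ w₂)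
    (hccw₁ : 0 < cross (v₁ - q) (w₁ - q)) (hccw₂ : 0 < cross (w₁ - q) (v₂ - q))
    (hccw₃ : 0 < cross (v₂ - q) (w₂ - q)) (hccw₄ : 0 < cross (w₂ - q) (v₁ - q))
    (hang : angAt q w₁ v₁ ≤ θ₀) :
    (-(1 / 2) + Real.cos θ₀) * Real.sqrt (Real.cos θ₀) * r
        ≤ eDist (midpoint ℝ v₁ v₂) w₁ ∧
      eDist (midpoint ℝ v₁ v₂) w₁ ≤ (3 / 2 - Real.cos θ₀) * r :=
  independent_segments_midpoint_distance_general r θ₀ hr hθ₀0 hθ₀1 v₁ v₂ w₁ w₂ q hv hw h11 h12 h21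
    hq₁ hq₂ hang

end
end

section
/- Let r > 0 and 0 ≤ θ_0 ≤ π/3. Let s = v_1v_2 and s' = w_1w_2 be independent segments in the Euclidean plane, intersecting at q, with counter-clockwise endpoint order v_1, w_1, v_2, w_2, and suppose the directed angle ∠(s,s') ≤ θ_0. Let m be the midpoint of v_1 and v_2 and take polar coordinates (r_0, φ) centered at m with polar axis in the direction of v_1. Set r_1 = (−1/2 + cos θ_0)√(cos θ_0)·r and r_2 = (3/2 − cos θ_0)·r. Then w_1 or w_2 lies in U_1 ∪ U_2, where U_1 = {(r_0,φ): r_1 ≤ r_0 ≤ r_2, 0 ≤ φ ≤ θ_0} and U_2 = {(r_0,φ): r_1 ≤ r_0 ≤ r_2, π ≤ φ ≤ π + θ_0}. -/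
/-!
Put the midpoint `m` at the origin and `v₁ = (a, 0)`, `v₂ = (-a, 0)`. The crossing point is
`q = (t, 0)`, and `w₁ = q + ρ u`, `w₂ = q - σ u` for a unit vector `u = (c, s)` with `s > 0`;
the angle condition says `c ≥ cos θ₀`. As `|w₂ - v₁| ≤ r`, the first coordinate of `w₂` is at
least `a - r`, and as the chord `w₁w₂` is longer than `r`, that of `w₁` is at least
`a - r + r cos θ₀ ≥ r (cos θ₀ - 1/2)`. This bounds `|w₁|` from below, and together with
`|w₁ - v₂| ≤ r` it gives `|w₁|² ≤ r² - 3a² + 2ar (1 - cos θ₀) ≤ ((3/2 - cos θ₀) r)²`.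
If `t ≥ 0`, then `w₁ = (t, 0) + ρ u` stays in the cone `0 ≤ φ ≤ θ₀` that contains `u`, so
`w₁ ∈ U₁`; if `t ≤ 0`, the same argument after the reflection through `m` puts `w₂` in `U₂`.
-/

noncomputable section

/-- Counter-clockwise rotation of a plane vector `e` by the angle `φ`. -/
def rot (φ : ℝ) (e : ℝ × ℝ) : ℝ × ℝ :=
  (e.1 * Real.cos φ - e.2 * Real.sin φ, e.1 * Real.sin φ + e.2 * Real.cos φ)

/-- The annular sector of points whose polar coordinates `(ρ, φ)` centred at `m`, with
polar axis the unit vector `e`, satisfy `r₁ ≤ ρ ≤ r₂` and `φ₁ ≤ φ ≤ φ₂`. -/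
def polarSector (m e : ℝ × ℝ) (r₁ r₂ φ₁ φ₂ : ℝ) : Set (ℝ × ℝ) :=
  {p | ∃ ρ φ : ℝ, r₁ ≤ ρ ∧ ρ ≤ r₂ ∧ φ₁ ≤ φ ∧ φ ≤ φ₂ ∧ p = m + ρ • rot φ e}

open Real

lemma eDist_eq_of_sq {p p' : ℝ × ℝ} {d : ℝ} (hd : 0 ≤ d)
    (h : (p.1 - p'.1) ^ 2 + (p.2 - p'.2) ^ 2 = d ^ 2) : eDist p p' = d := by
  rw [eDist, h, sqrt_sq hd]

lemma eDist_neg_neg (p p' : ℝ × ℝ) : eDist (-p) (-p') = eDist p p' := by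
  unfold eDist
  congr 1
  simp only [Prod.fst_neg, Prod.snd_neg]
  ring

lemma abs_fst_sub_le_eDist (p p' : ℝ × ℝ) : |p.1 - p'.1| ≤ eDist p p' :=
  abs_le_sqrt (le_add_of_nonneg_right (sq_nonneg _))

lemma fst_le_eDist_zero (p : ℝ × ℝ) : p.1 ≤ eDist 0 p := by
  have h := abs_fst_sub_le_eDist 0 p
  rw [Prod.fst_zero, zero_sub, abs_neg] at h
  exact (le_abs_self _).trans h

lemma exists_eq_polar (v : ℝ × ℝ) : ∃ ρ c s : ℝ, 0 ≤ ρ ∧ c ^ 2 + s ^ 2 = 1 ∧ v = (ρ * c, ρ * s) :=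
  let z : ℂ := ⟨v.1, v.2⟩
  ⟨‖z‖, cos z.arg, sin z.arg, norm_nonneg z, cos_sq_add_sin_sq _,
    Prod.ext (Complex.norm_mul_cos_arg z).symm (Complex.norm_mul_sin_arg z).symm⟩

lemma mem_polarSector_of_cos_mul_le {p : ℝ × ℝ} {r₁ r₂ θ : ℝ} (hθ : 0 ≤ θ)
    (hp : 0 ≤ p.2) (hcos : cos θ * eDist 0 p ≤ p.1) (h₁ : r₁ ≤ eDist 0 p)
    (h₂ : eDist 0 p ≤ r₂) :
    p ∈ polarSector 0 (1, 0) r₁ r₂ 0 θ := by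
  set z : ℂ := ⟨p.1, p.2⟩
  have hz : ‖z‖ = eDist 0 p := by
    simp [z, Complex.norm_def, Complex.normSq_apply, eDist, sq]
  refine ⟨‖z‖, z.arg, hz ▸ h₁, hz ▸ h₂, Complex.arg_nonneg_iff.2 hp, ?_, ?_⟩
  · by_contra! h
    have hz0 : z ≠ 0 := by rintro hz0; simp [hz0] at h; linarith
    have hlt := cos_lt_cos_of_nonneg_of_le_pi hθ (Complex.arg_le_pi z) h
    have hpos : 0 < ‖z‖ := norm_pos_iff.2 hz0
    have hre := Complex.norm_mul_cos_arg z
    rw [hz] at hre hpos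
    nlinarith
  · ext <;> simp [rot, Complex.norm_mul_cos_arg, Complex.norm_mul_sin_arg, z]

lemma neg_mem_polarSector_pi_add {e p : ℝ × ℝ} {r₁ r₂ φ₁ φ₂ : ℝ}
    (hp : p ∈ polarSector 0 e r₁ r₂ φ₁ φ₂) :
    -p ∈ polarSector 0 e r₁ r₂ (π + φ₁) (π + φ₂) := by
  obtain ⟨ρ, φ, h₁, h₂, h₃, h₄, rfl⟩ := hp
  refine ⟨ρ, π + φ, h₁, h₂, by linarith, by linarith, ?_⟩
  ext <;> simp [rot, cos_add, sin_add] <;> ring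

lemma eDist_zero_le_of_eDist_le {a r c₀ : ℝ} {p : ℝ × ℝ} (hr : 0 ≤ r) (ha : r ≤ 2 * a)
    (hc₀ : -(1 / 2) ≤ c₀) (hc₀' : c₀ ≤ 1) (hp : eDist (-a, 0) p ≤ r)
    (hx : a - r + r * c₀ ≤ p.1) :
    eDist 0 p ≤ (3 / 2 - c₀) * r := by
  rw [eDist, sqrt_le_left hr] at hp
  rw [eDist, sqrt_le_left (by nlinarith)]
  simp only [Prod.fst_zero, Prod.snd_zero, zero_sub, even_two, Even.neg_pow] at hp ⊢
  have hax : 2 * a * (a - r + r * c₀) ≤ 2 * a * p.1 := mul_le_mul_of_nonneg_left hx (by linarith)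
  nlinarith [mul_nonneg (sub_nonneg.2 ha) (by nlinarith : 0 ≤ 3 * a / 2 + r * (c₀ - 1 / 4)),
    sq_nonneg ((1 - c₀) * r)]

lemma chord_endpoint_mem_polarSector {r θ₀ a t ρ σ c s r₁ r₂ : ℝ} (hr : 0 ≤ r)
    (ha : r ≤ 2 * a) (hθ₀ : 0 ≤ θ₀) (hθ₀' : θ₀ ≤ π / 2)
    (hr₁ : r₁ ≤ (cos θ₀ - 1 / 2) * r) (hr₂ : (3 / 2 - cos θ₀) * r ≤ r₂)
    (ht : 0 ≤ t) (hρ : 0 ≤ ρ) (hs : 0 ≤ s) (hcs : c ^ 2 + s ^ 2 = 1) (hc : cos θ₀ ≤ c)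
    (hρσ : r ≤ ρ + σ) (h₁ : eDist (-a, 0) (t + ρ * c, ρ * s) ≤ r)
    (h₂ : eDist (a, 0) (t - σ * c, -(σ * s)) ≤ r) :
    (t + ρ * c, ρ * s) ∈ polarSector 0 (1, 0) r₁ r₂ 0 θ₀ := by
  have hc₀ : 0 ≤ cos θ₀ := cos_nonneg_of_neg_pi_div_two_le_of_le (by linarith [pi_pos]) hθ₀'
  have hc₁ : c ≤ 1 := by nlinarith
  have hfar : a - r ≤ t - σ * c := by
    have h := (le_abs_self _).trans ((abs_fst_sub_le_eDist _ _).trans h₂)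
    dsimp only at h
    linarith
  -- the chord from `(t - σc, -σs)` to `(t + ρc, ρs)` has direction `(c, s)` and length `≥ r`
  have hfst : a - r + r * cos θ₀ ≤ t + ρ * c := by
    nlinarith [mul_le_mul_of_nonneg_right hρσ (hc₀.trans hc), mul_le_mul_of_nonneg_left hc hr]
  have hnorm : eDist 0 (t + ρ * c, ρ * s) ≤ t + ρ := by
    rw [eDist, sqrt_le_left (by linarith)]
    simp only [Prod.fst_zero, Prod.snd_zero, zero_sub, even_two, Even.neg_pow]
    have hsq : (t + ρ * c) ^ 2 + (ρ * s) ^ 2 = t ^ 2 + ρ ^ 2 + 2 * t * ρ * c := by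
      linear_combination ρ ^ 2 * hcs
    nlinarith [mul_nonneg (mul_nonneg ht hρ) (sub_nonneg.2 hc₁)]
  refine mem_polarSector_of_cos_mul_le hθ₀ (mul_nonneg hρ hs) ?_ ?_ ?_
  · calc cos θ₀ * eDist 0 (t + ρ * c, ρ * s) ≤ cos θ₀ * (t + ρ) :=
          mul_le_mul_of_nonneg_left hnorm hc₀
      _ ≤ t + ρ * c := by nlinarith [cos_le_one θ₀]
  · calc r₁ ≤ (cos θ₀ - 1 / 2) * r := hr₁
      _ ≤ t + ρ * c := by linarith
      _ ≤ eDist 0 (t + ρ * c, ρ * s) := fst_le_eDist_zero (t + ρ * c, ρ * s)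
  · exact (eDist_zero_le_of_eDist_le hr ha (by linarith) (cos_le_one θ₀) h₁ hfst).trans hr₂

lemma angAt_eq_arccos {t a ρ c s : ℝ} (hρ : 0 < ρ) (ht : t < a) (hcs : c ^ 2 + s ^ 2 = 1) :
    angAt (t, 0) (t + ρ * c, ρ * s) (a, 0) = arccos c := by
  have h₁ : eDist (t, 0) (t + ρ * c, ρ * s) = ρ :=
    eDist_eq_of_sq hρ.le (by linear_combination ρ ^ 2 * hcs)
  have h₂ : eDist (t, 0) (a, 0) = a - t := eDist_eq_of_sq (sub_nonneg.2 ht.le) (by ring)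
  rw [angAt, h₁, h₂]
  congr 1
  field_simp [(sub_pos.2 ht).ne']
  ring

theorem endpoint_location_normalized {r θ₀ a r₁ r₂ : ℝ} {w₁ w₂ q : ℝ × ℝ} (hr : 0 ≤ r)
    (hθ₀ : 0 ≤ θ₀) (hθ₀' : θ₀ ≤ π / 2)
    (hr₁ : r₁ ≤ (cos θ₀ - 1 / 2) * r) (hr₂ : (3 / 2 - cos θ₀) * r ≤ r₂)
    (ha : r < 2 * a) (hw : r ≤ eDist w₁ w₂)
    (h12 : eDist (a, 0) w₂ ≤ r) (h21 : eDist (-a, 0) w₁ ≤ r)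
    (hq₁ : q ∈ segment ℝ (a, 0) (-a, 0)) (hq₂ : q ∈ segment ℝ w₁ w₂)
    (hccw₁ : 0 < cross ((a, 0) - q) (w₁ - q)) (hccw₃ : 0 < cross ((-a, 0) - q) (w₂ - q))
    (hang : angAt q w₁ (a, 0) ≤ θ₀) :
    w₁ ∈ polarSector 0 (1, 0) r₁ r₂ 0 θ₀ ∨ w₂ ∈ polarSector 0 (1, 0) r₁ r₂ π (π + θ₀) := by
  obtain ⟨t, rfl⟩ : ∃ t : ℝ, q = (t, 0) := by
    obtain ⟨α, β, -, -, -, rfl⟩ := hq₁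
    exact ⟨α * a - β * a, by ext <;> simp; ring⟩
  obtain ⟨ρ, c, s, hρ, hcs, hw₁⟩ := exists_eq_polar (w₁ - (t, 0))
  obtain ⟨k, hk, hw₂⟩ := (mem_segment_iff_sameRay.1 hq₂).exists_nonneg_left <| by
    rintro h
    rw [← sub_eq_zero.1 h] at hccw₁
    simp [cross] at hccw₁
  obtain rfl : w₁ = (t + ρ * c, ρ * s) := by
    rw [← sub_add_cancel w₁ (t, 0), hw₁]
    ext <;> simp [add_comm]
  obtain ⟨σ, hσ, rfl⟩ : ∃ σ, 0 ≤ σ ∧ w₂ = (t - σ * c, -(σ * s)) := by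
    refine ⟨k * ρ, mul_nonneg hk hρ, ?_⟩
    rw [← sub_add_cancel w₂ (t, 0), ← hw₂]
    ext <;> simp <;> ring
  have h₁ : 0 < (a - t) * (ρ * s) := by simpa [cross] using hccw₁
  have h₃ : 0 < (a + t) * (σ * s) := by simp [cross] at hccw₃; linarith
  have hs : 0 < s := by
    by_contra! hs
    have := neg_of_mul_pos_left h₁ (mul_nonpos_of_nonneg_of_nonpos hρ hs)
    have := neg_of_mul_pos_left h₃ (mul_nonpos_of_nonneg_of_nonpos hσ hs)
    linarith
  have hat : t < a := sub_pos.1 (pos_of_mul_pos_left h₁ (mul_nonneg hρ hs.le))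
  have hρ' : 0 < ρ := pos_of_mul_pos_left (pos_of_mul_pos_right h₁ (sub_pos.2 hat).le) hs.le
  have hc : cos θ₀ ≤ c := by
    rw [angAt_eq_arccos hρ' hat hcs] at hang
    have h := cos_le_cos_of_nonneg_of_le_pi (arccos_nonneg c) (by linarith [pi_pos]) hang
    rwa [cos_arccos (by nlinarith) (by nlinarith)] at h
  rw [eDist_eq_of_sq (d := ρ + σ) (by positivity) (by linear_combination (ρ + σ) ^ 2 * hcs)] at hw
  rcases le_total 0 t with ht | ht
  · exact Or.inl (chord_endpoint_mem_polarSector hr ha.le hθ₀ hθ₀' hr₁ hr₂ ht hρ hs.le hcs hc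
      hw h21 h12)
  · -- the reflection through the origin exchanges the roles of `w₁` and `w₂`
    have h := chord_endpoint_mem_polarSector (t := -t) (ρ := σ) (σ := ρ) hr ha.le hθ₀ hθ₀' hr₁
      hr₂ (neg_nonneg.2 ht) hσ hs.le hcs hc (by linarith) ?_ ?_
    · right
      have h' := neg_mem_polarSector_pi_add h
      rw [add_zero] at h'
      convert h' using 1
      ext <;> simp; ring
    · rw [← eDist_neg_neg]
      convert h12 using 2 <;> simp; ring
    · rw [← eDist_neg_neg]
      convert h21 using 2 <;> simp; ring

/-- The point with coordinates `p` in the orthonormal frame at `m` with first axis `e`. -/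
def frameMap (m e p : ℝ × ℝ) : ℝ × ℝ :=
  (m.1 + p.1 * e.1 - p.2 * e.2, m.2 + p.1 * e.2 + p.2 * e.1)

section frameMap

variable {m e : ℝ × ℝ}

lemma frameMap_surjective (he : e.1 ^ 2 + e.2 ^ 2 = 1) : Function.Surjective (frameMap m e) :=
  fun p => ⟨((p.1 - m.1) * e.1 + (p.2 - m.2) * e.2, (p.2 - m.2) * e.1 - (p.1 - m.1) * e.2), by
    ext
    · simp only [frameMap]; linear_combination (p.1 - m.1) * he
    · simp only [frameMap]; linear_combination (p.2 - m.2) * he⟩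

lemma frameMap_injective (he : e.1 ^ 2 + e.2 ^ 2 = 1) : Function.Injective (frameMap m e) := by
  intro p p' h
  have h₁ := congrArg Prod.fst h
  have h₂ := congrArg Prod.snd h
  simp only [frameMap] at h₁ h₂
  ext
  · linear_combination e.1 * h₁ + e.2 * h₂ - (p.1 - p'.1) * he
  · linear_combination e.1 * h₂ - e.2 * h₁ - (p.2 - p'.2) * he

lemma eDist_frameMap (he : e.1 ^ 2 + e.2 ^ 2 = 1) (p p' : ℝ × ℝ) :
    eDist (frameMap m e p) (frameMap m e p') = eDist p p' := by
  unfold eDist frameMap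
  congr 1
  linear_combination ((p.1 - p'.1) ^ 2 + (p.2 - p'.2) ^ 2) * he

lemma cross_frameMap_sub (he : e.1 ^ 2 + e.2 ^ 2 = 1) (o p p' : ℝ × ℝ) :
    cross (frameMap m e p - frameMap m e o) (frameMap m e p' - frameMap m e o) =
      cross (p - o) (p' - o) := by
  simp only [cross, frameMap, Prod.fst_sub, Prod.snd_sub]
  linear_combination ((p.1 - o.1) * (p'.2 - o.2) - (p.2 - o.2) * (p'.1 - o.1)) * he

lemma angAt_frameMap (he : e.1 ^ 2 + e.2 ^ 2 = 1) (o p p' : ℝ × ℝ) :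
    angAt (frameMap m e o) (frameMap m e p) (frameMap m e p') = angAt o p p' := by
  unfold angAt
  rw [eDist_frameMap he, eDist_frameMap he]
  congr 2
  simp only [frameMap]
  linear_combination ((p.1 - o.1) * (p'.1 - o.1) + (p.2 - o.2) * (p'.2 - o.2)) * he

lemma mem_segment_of_frameMap_mem_segment (he : e.1 ^ 2 + e.2 ^ 2 = 1) {o p p' : ℝ × ℝ}
    (h : frameMap m e o ∈ segment ℝ (frameMap m e p) (frameMap m e p')) :
    o ∈ segment ℝ p p' := by
  obtain ⟨α, β, hα, hβ, hαβ, h⟩ := h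
  refine ⟨α, β, hα, hβ, hαβ, frameMap_injective (m := m) he ?_⟩
  rw [← h]
  ext
  · simp only [frameMap, Prod.fst_add, Prod.smul_fst, Prod.snd_add, Prod.smul_snd, smul_eq_mul]
    linear_combination -m.1 * hαβ
  · simp only [frameMap, Prod.fst_add, Prod.smul_fst, Prod.snd_add, Prod.smul_snd, smul_eq_mul]
    linear_combination -m.2 * hαβ

lemma frameMap_mem_polarSector {p : ℝ × ℝ} {r₁ r₂ φ₁ φ₂ : ℝ}
    (h : p ∈ polarSector 0 (1, 0) r₁ r₂ φ₁ φ₂) : frameMap m e p ∈ polarSector m e r₁ r₂ φ₁ φ₂ := by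
  obtain ⟨ρ, φ, h₁, h₂, h₃, h₄, rfl⟩ := h
  refine ⟨ρ, φ, h₁, h₂, h₃, h₄, ?_⟩
  ext <;> simp [frameMap, rot] <;> ring

lemma frameMap_of_midpoint {v₁ v₂ m e : ℝ × ℝ} {a : ℝ} (ha : 0 < a) (hd : eDist v₁ v₂ = 2 * a)
    (hm : m = midpoint ℝ v₁ v₂) (he : e = (eDist m v₁)⁻¹ • (v₁ - m)) :
    e.1 ^ 2 + e.2 ^ 2 = 1 ∧ v₁ = frameMap m e (a, 0) ∧ v₂ = frameMap m e (-a, 0) := by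
  have hm₁ : m.1 = (v₁.1 + v₂.1) / 2 := by rw [hm]; simp [midpoint, AffineMap.lineMap_apply]; ring
  have hm₂ : m.2 = (v₁.2 + v₂.2) / 2 := by rw [hm]; simp [midpoint, AffineMap.lineMap_apply]; ring
  have hsq : (v₁.1 - m.1) ^ 2 + (v₁.2 - m.2) ^ 2 = a ^ 2 := by
    have h := congrArg (· ^ 2) hd
    simp only [eDist] at h
    rw [sq_sqrt (by positivity)] at h
    rw [hm₁, hm₂]
    linear_combination h / 4
  have hmv : eDist m v₁ = a := by
    rw [eDist, ← sqrt_sq ha.le, ← hsq]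
    ring_nf
  subst he
  rw [hmv]
  refine ⟨?_, ?_, ?_⟩
  · simp only [Prod.smul_fst, Prod.smul_snd, Prod.fst_sub, Prod.snd_sub, smul_eq_mul]
    field_simp
    linear_combination hsq
  · ext <;> simp [frameMap] <;> field_simp <;> ring
  · ext <;> simp [frameMap] <;> field_simp <;> linarith

end frameMap

lemma one_half_le_cos {θ : ℝ} (h₀ : 0 ≤ θ) (h₁ : θ ≤ π / 3) : 1 / 2 ≤ cos θ := by
  rw [← cos_pi_div_three]
  exact cos_le_cos_of_nonneg_of_le_pi h₀ (by linarith [pi_pos]) h₁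

theorem independent_segments_endpoint_location_general (r θ₀ : ℝ) (hr : 0 < r)
    (hθ₀0 : 0 ≤ θ₀) (hθ₀1 : θ₀ ≤ Real.pi / 3)
    (v₁ v₂ w₁ w₂ q : ℝ × ℝ)
    (hv : r < eDist v₁ v₂) (hw : r < eDist w₁ w₂)
    (h12 : eDist v₁ w₂ ≤ r)
    (h21 : eDist v₂ w₁ ≤ r)
    (hq₁ : q ∈ segment ℝ v₁ v₂) (hq₂ : q ∈ segment ℝ w₁ w₂)
    (hccw₁ : 0 < cross (v₁ - q) (w₁ - q))
    (hccw₃ : 0 < cross (v₂ - q) (w₂ - q))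
    (hang : angAt q w₁ v₁ ≤ θ₀)
    (m : ℝ × ℝ) (hm : m = midpoint ℝ v₁ v₂)
    (e : ℝ × ℝ) (he : e = (eDist m v₁)⁻¹ • (v₁ - m))
    (r₁ r₂ : ℝ)
    (hr₁ : r₁ = (-(1 / 2) + Real.cos θ₀) * Real.sqrt (Real.cos θ₀) * r)
    (hr₂ : r₂ = (3 / 2 - Real.cos θ₀) * r) :
    w₁ ∈ polarSector m e r₁ r₂ 0 θ₀ ∪ polarSector m e r₁ r₂ Real.pi (Real.pi + θ₀) ∨
      w₂ ∈ polarSector m e r₁ r₂ 0 θ₀ ∪ polarSector m e r₁ r₂ Real.pi (Real.pi + θ₀) := by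
  have hc₀ := one_half_le_cos hθ₀0 hθ₀1
  have hr₁' : r₁ ≤ (cos θ₀ - 1 / 2) * r := by
    rw [hr₁, mul_right_comm]
    have h := mul_le_of_le_one_right (mul_nonneg (by linarith : 0 ≤ -(1 / 2) + cos θ₀) hr.le)
      (sqrt_le_one.2 (cos_le_one θ₀))
    linarith
  obtain ⟨a, hd⟩ : ∃ a, eDist v₁ v₂ = 2 * a := ⟨eDist v₁ v₂ / 2, by ring⟩
  rw [hd] at hv
  obtain ⟨he₁, rfl, rfl⟩ := frameMap_of_midpoint (by linarith) hd hm he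
  obtain ⟨W₁, rfl⟩ := frameMap_surjective (m := m) he₁ w₁
  obtain ⟨W₂, rfl⟩ := frameMap_surjective (m := m) he₁ w₂
  obtain ⟨Q, rfl⟩ := frameMap_surjective (m := m) he₁ q
  simp only [eDist_frameMap he₁, cross_frameMap_sub he₁, angAt_frameMap he₁]
    at hw h12 h21 hccw₁ hccw₃ hang
  rcases endpoint_location_normalized hr.le hθ₀0 (by linarith) hr₁' hr₂.ge hv hw.le h12 h21
      (mem_segment_of_frameMap_mem_segment he₁ hq₁) (mem_segment_of_frameMap_mem_segment he₁ hq₂)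
      hccw₁ hccw₃ hang with h | h
  · exact Or.inl (Or.inl (frameMap_mem_polarSector h))
  · exact Or.inr (Or.inr (frameMap_mem_polarSector h))

/-- If two independent segments `v₁v₂`, `w₁w₂` intersect at `q` with counter-clockwise
endpoint order `v₁, w₁, v₂, w₂` and directed angle `∠(s,s') = ∠ w₁ q v₁ ≤ θ₀ ≤ π/3`, then
`w₁` or `w₂` lies in `U₁ ∪ U₂`, the annular sectors, in polar coordinates centred at
the midpoint `m` of `v₁v₂` with polar axis towards `v₁`, with radii in
`[r₁, r₂] = [(−1/2+cos θ₀)√(cos θ₀)·r, (3/2−cos θ₀)·r]` and angle in `[0, θ₀]`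
resp. `[π, π + θ₀]`. -/
theorem independent_segments_endpoint_location (r θ₀ : ℝ) (hr : 0 < r)
    (hθ₀0 : 0 ≤ θ₀) (hθ₀1 : θ₀ ≤ Real.pi / 3)
    (v₁ v₂ w₁ w₂ q : ℝ × ℝ)
    (hv : r < eDist v₁ v₂) (hw : r < eDist w₁ w₂)
    (h11 : eDist v₁ w₁ ≤ r) (h12 : eDist v₁ w₂ ≤ r)
    (h21 : eDist v₂ w₁ ≤ r) (h22 : eDist v₂ w₂ ≤ r)
    (hq₁ : q ∈ segment ℝ v₁ v₂) (hq₂ : q ∈ segment ℝ w₁ w₂)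
    (hccw₁ : 0 < cross (v₁ - q) (w₁ - q)) (hccw₂ : 0 < cross (w₁ - q) (v₂ - q))
    (hccw₃ : 0 < cross (v₂ - q) (w₂ - q)) (hccw₄ : 0 < cross (w₂ - q) (v₁ - q))
    (hang : angAt q w₁ v₁ ≤ θ₀)
    (m : ℝ × ℝ) (hm : m = midpoint ℝ v₁ v₂)
    (e : ℝ × ℝ) (he : e = (eDist m v₁)⁻¹ • (v₁ - m))
    (r₁ r₂ : ℝ)
    (hr₁ : r₁ = (-(1 / 2) + Real.cos θ₀) * Real.sqrt (Real.cos θ₀) * r)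
    (hr₂ : r₂ = (3 / 2 - Real.cos θ₀) * r) :
    w₁ ∈ polarSector m e r₁ r₂ 0 θ₀ ∪ polarSector m e r₁ r₂ Real.pi (Real.pi + θ₀) ∨
      w₂ ∈ polarSector m e r₁ r₂ 0 θ₀ ∪ polarSector m e r₁ r₂ Real.pi (Real.pi + θ₀) :=
  independent_segments_endpoint_location_general r θ₀ hr hθ₀0 hθ₀1 v₁ v₂ w₁ w₂ q hv hw h12 h21 hq₁
    hq₂ hccw₁ hccw₃ hang m hm e he r₁ r₂ hr₁ hr₂

end
end

section
/- Let R > 0, let k ≥ 4 be an integer, θ_0 = π/(3k), and define r_1, r_2 by cosh(2r_1) = cosh(R)/cos^2(θ_0/2) and cosh(2r_2) = (cosh(R) − 1)/cos^2(θ_0); assume r_1 < r_2 ≤ R. For 1 ≤ i ≤ 2k let U_i be the set of points with hyperbolic polar coordinates (r,φ) satisfying r_1 ≤ r ≤ r_2 and 3(i−1)θ_0 ≤ φ ≤ (3(i−1)+1)θ_0. Then for any 1 ≤ i ≤ k, 1 ≤ j ≤ 2k, any v ∈ U_i and any w ∈ U_j: if j = i + k then the hyperbolic distance d(v,w) is strictly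 greater than R, and if j ≠ i + k then d(v,w) ≤ R. -/
open Real

noncomputable section

/-- The inverse hyperbolic cosine (for `x ≥ 1`). -/
def arcosh (x : ℝ) : ℝ := Real.log (x + Real.sqrt (x ^ 2 - 1))

/-- `cosh` of the hyperbolic distance between two points given in hyperbolic polar
coordinates `(r, φ)`:
`cosh d(u,v) = cosh r_u cosh r_v − sinh r_u sinh r_v cos (π − |π − |φ_u − φ_v||)`. -/
def hCosh (u v : ℝ × ℝ) : ℝ :=
  Real.cosh u.1 * Real.cosh v.1 -
    Real.sinh u.1 * Real.sinh v.1 * Real.cos (π - abs (π - abs (u.2 - v.2)))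

/-- The hyperbolic distance between two points in hyperbolic polar coordinates. -/
def hDist (u v : ℝ × ℝ) : ℝ := _root_.arcosh (hCosh u v)

/-- The hyperbolic annular sector `U_i` (for `1 ≤ i`): points whose hyperbolic polar
coordinates `(r, φ)` satisfy `r₁ ≤ r ≤ r₂` and `3(i-1)θ₀ ≤ φ ≤ (3(i-1)+1)θ₀`. -/
def hSector (r₁ r₂ θ₀ : ℝ) (i : ℕ) : Set (ℝ × ℝ) :=
  {p | r₁ ≤ p.1 ∧ p.1 ≤ r₂ ∧
    3 * ((i : ℝ) - 1) * θ₀ ≤ p.2 ∧ p.2 ≤ (3 * ((i : ℝ) - 1) + 1) * θ₀}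

/-!
By the hyperbolic law of cosines,
`cosh d(u,v) = cosh r_u cosh r_v + sinh r_u sinh r_v cos ψ` with `ψ = φ_u - φ_v + π`, the angle
between `u` and the direction opposite to `v`. Once `cos ψ` is bounded by a constant `c ≥ 0`,
this is monotone in both radii, and at a common radius `r` with `c = cos 2α` it equals
`cos² α cosh 2r + sin² α`. For opposite sectors `|ψ| ≤ θ₀`, so taking `r = r₁`, `α = θ₀/2`
gives `cosh d ≥ cosh R + sin² (θ₀/2)`. For any other pair `2θ₀ ≤ |ψ| ≤ 2π - 2θ₀`, so taking
`r = r₂`, `α = θ₀` gives `cosh d ≤ cosh R - cos² θ₀`.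
-/

theorem hCosh_eq (u v : ℝ × ℝ) :
    hCosh u v = cosh u.1 * cosh v.1 - sinh u.1 * sinh v.1 * cos (u.2 - v.2) := by
  rw [hCosh, cos_pi_sub, cos_abs, cos_pi_sub, cos_abs, neg_neg]

theorem one_le_hCosh (u v : ℝ × ℝ) : 1 ≤ hCosh u v := by
  have hsinh : sinh u.1 * sinh v.1 * cos (u.2 - v.2) ≤ sinh |u.1| * sinh |v.1| := by
    calc _ ≤ |sinh u.1 * sinh v.1 * cos (u.2 - v.2)| := le_abs_self _
      _ ≤ |sinh u.1| * |sinh v.1| := by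
        rw [abs_mul, abs_mul]
        exact mul_le_of_le_one_right (by positivity) (abs_cos_le_one _)
      _ = sinh |u.1| * sinh |v.1| := by rw [abs_sinh, abs_sinh]
  have hcosh := cosh_sub |u.1| |v.1|
  rw [cosh_abs, cosh_abs] at hcosh
  rw [hCosh_eq]
  linarith [one_le_cosh (|u.1| - |v.1|)]

theorem hDist_eq_arcosh (u v : ℝ × ℝ) : hDist u v = Real.arcosh (hCosh u v) := rfl

theorem lt_hDist_of_cosh_lt_hCosh {R : ℝ} {u v : ℝ × ℝ} (hR : 0 ≤ R)
    (h : cosh R < hCosh u v) : R < hDist u v := by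
  rw [hDist_eq_arcosh, ← arcosh_cosh hR]
  exact (arcosh_lt_arcosh (cosh_pos R) ((cosh_pos R).trans h)).2 h

theorem hDist_le_of_hCosh_le_cosh {R : ℝ} {u v : ℝ × ℝ} (hR : 0 ≤ R)
    (h : hCosh u v ≤ cosh R) : hDist u v ≤ R := by
  rw [hDist_eq_arcosh, ← arcosh_cosh hR]
  exact (arcosh_le_arcosh (one_pos.trans_le (one_le_hCosh u v)) (cosh_pos R)).2 h

theorem cosh_mul_cosh_add_mul_sinh_mul_sinh_le {a b a' b' c : ℝ} (ha : 0 ≤ a) (hb : 0 ≤ b)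
    (haa' : a ≤ a') (hbb' : b ≤ b') (hc : 0 ≤ c) :
    cosh a * cosh b + c * (sinh a * sinh b) ≤ cosh a' * cosh b' + c * (sinh a' * sinh b') := by
  have hcosh := cosh_strictMonoOn.monotoneOn
  have ha' : 0 ≤ a' := ha.trans haa'
  have := sinh_nonneg_iff.2 hb
  have := sinh_nonneg_iff.2 ha'
  gcongr
  exacts [hcosh ha ha' haa', hcosh hb (hb.trans hbb') hbb', sinh_le_sinh.2 haa', sinh_le_sinh.2 hbb']

theorem cosh_sq_add_mul_sinh_sq_le_hCosh {r c : ℝ} {u v : ℝ × ℝ} (hr : 0 ≤ r)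
    (hu : r ≤ u.1) (hv : r ≤ v.1) (hc : 0 ≤ c) (hcos : c ≤ cos (u.2 - v.2 + π)) :
    cosh r ^ 2 + c * sinh r ^ 2 ≤ hCosh u v := by
  have hsinh : 0 ≤ sinh u.1 * sinh v.1 :=
    mul_nonneg (sinh_nonneg_iff.2 (hr.trans hu)) (sinh_nonneg_iff.2 (hr.trans hv))
  rw [cos_add_pi] at hcos
  calc cosh r ^ 2 + c * sinh r ^ 2 ≤ cosh u.1 * cosh v.1 + c * (sinh u.1 * sinh v.1) := by
        simpa only [sq] using cosh_mul_cosh_add_mul_sinh_mul_sinh_le hr hr hu hv hc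
    _ ≤ hCosh u v := by rw [hCosh_eq]; nlinarith

theorem hCosh_le_cosh_sq_add_mul_sinh_sq {r c : ℝ} {u v : ℝ × ℝ} (hu₀ : 0 ≤ u.1) (hv₀ : 0 ≤ v.1)
    (hu : u.1 ≤ r) (hv : v.1 ≤ r) (hc : 0 ≤ c) (hcos : cos (u.2 - v.2 + π) ≤ c) :
    hCosh u v ≤ cosh r ^ 2 + c * sinh r ^ 2 := by
  have hsinh : 0 ≤ sinh u.1 * sinh v.1 := mul_nonneg (sinh_nonneg_iff.2 hu₀) (sinh_nonneg_iff.2 hv₀)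
  rw [cos_add_pi] at hcos
  calc hCosh u v ≤ cosh u.1 * cosh v.1 + c * (sinh u.1 * sinh v.1) := by rw [hCosh_eq]; nlinarith
    _ ≤ cosh r ^ 2 + c * sinh r ^ 2 := by
        simpa only [sq] using cosh_mul_cosh_add_mul_sinh_mul_sinh_le hu₀ hv₀ hu hv hc

theorem cosh_sq_add_cos_two_mul_mul_sinh_sq (r α : ℝ) :
    cosh r ^ 2 + cos (2 * α) * sinh r ^ 2 = cos α ^ 2 * cosh (2 * r) + sin α ^ 2 := by
  rw [cos_two_mul, cosh_two_mul, cosh_sq, sin_sq]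
  ring

theorem cos_le_cos_of_abs_le {t y : ℝ} (hy : |y| ≤ t) (ht : t ≤ π) : cos t ≤ cos y := by
  rw [← cos_abs y]
  exact cos_le_cos_of_nonneg_of_le_pi (abs_nonneg y) ht hy

theorem cos_le_cos_of_le_abs_of_abs_le_two_pi_sub {t y : ℝ} (ht₀ : 0 ≤ t)
    (hty : t ≤ |y|) (hy : |y| ≤ 2 * π - t) : cos y ≤ cos t := by
  rw [← cos_abs y]
  rcases le_total |y| π with hyπ | hyπ
  · exact cos_le_cos_of_nonneg_of_le_pi ht₀ hyπ hty
  · rw [← cos_two_pi_sub]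
    exact cos_le_cos_of_nonneg_of_le_pi ht₀ (by linarith) (by linarith)

theorem abs_sub_sub_le_of_mem_hSector {r₁ r₂ θ : ℝ} {i j : ℕ} {p q : ℝ × ℝ}
    (hp : p ∈ hSector r₁ r₂ θ i) (hq : q ∈ hSector r₁ r₂ θ j) :
    |p.2 - q.2 - 3 * ((i : ℝ) - j) * θ| ≤ θ := by
  obtain ⟨-, -, hp₁, hp₂⟩ := hp
  obtain ⟨-, -, hq₁, hq₂⟩ := hq
  rw [abs_le]
  constructor <;> linarith

theorem two_mul_le_abs_and_abs_le_of_abs_sub_int_mul_le {y θ : ℝ} {m : ℤ} {M : ℝ}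
    (hm₀ : m ≠ 0) (hM : |(m : ℝ)| ≤ M) (hθ : 0 ≤ θ) (hy : |y - 3 * m * θ| ≤ θ) :
    2 * θ ≤ |y| ∧ |y| ≤ (3 * M + 1) * θ := by
  have hm : 1 ≤ |(m : ℝ)| := by exact_mod_cast Int.one_le_abs hm₀
  have hmθ : |3 * (m : ℝ) * θ| = 3 * |(m : ℝ)| * θ := by
    rw [abs_mul, abs_mul, abs_of_pos three_pos, abs_of_nonneg hθ]
  constructor
  · nlinarith [abs_sub_abs_le_abs_sub (3 * (m : ℝ) * θ) y, abs_sub_comm (3 * (m : ℝ) * θ) y]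
  · nlinarith [abs_sub_abs_le_abs_sub y (3 * (m : ℝ) * θ)]

theorem lt_hDist_of_abs_add_pi_le {R θ r : ℝ} {u v : ℝ × ℝ} (hR : 0 ≤ R) (hθ₀ : 0 < θ)
    (hθ : θ ≤ π / 2) (hr₀ : 0 ≤ r) (hr : cosh (2 * r) = cosh R / cos (θ / 2) ^ 2)
    (hu : r ≤ u.1) (hv : r ≤ v.1) (hangle : |u.2 - v.2 + π| ≤ θ) : R < hDist u v := by
  have hcos : 0 < cos (θ / 2) := cos_pos_of_mem_Ioo ⟨by linarith, by linarith⟩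
  have hsin : 0 < sin (θ / 2) := sin_pos_of_pos_of_lt_pi (by linarith) (by linarith)
  refine lt_hDist_of_cosh_lt_hCosh hR ?_
  calc cosh R < cos (θ / 2) ^ 2 * cosh (2 * r) + sin (θ / 2) ^ 2 := by
        rw [hr, mul_div_cancel₀ _ (by positivity)]
        exact lt_add_of_pos_right _ (by positivity)
    _ = cosh r ^ 2 + cos θ * sinh r ^ 2 := by
        rw [← cosh_sq_add_cos_two_mul_mul_sinh_sq, mul_div_cancel₀ _ two_ne_zero]
    _ ≤ hCosh u v := cosh_sq_add_mul_sinh_sq_le_hCosh hr₀ hu hv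
        (cos_nonneg_of_mem_Icc ⟨by linarith, hθ⟩) (cos_le_cos_of_abs_le hangle (by linarith))

theorem hDist_le_of_le_abs_add_pi {R θ r : ℝ} {u v : ℝ × ℝ} (hR : 0 ≤ R) (hθ₀ : 0 ≤ θ)
    (hθ : θ ≤ π / 4) (hr : cosh (2 * r) = (cosh R - 1) / cos θ ^ 2)
    (hu₀ : 0 ≤ u.1) (hv₀ : 0 ≤ v.1) (hu : u.1 ≤ r) (hv : v.1 ≤ r)
    (hangle₁ : 2 * θ ≤ |u.2 - v.2 + π|) (hangle₂ : |u.2 - v.2 + π| ≤ 2 * π - 2 * θ) :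
    hDist u v ≤ R := by
  have hcos : 0 < cos θ := cos_pos_of_mem_Ioo ⟨by linarith [pi_pos], by linarith [pi_pos]⟩
  refine hDist_le_of_hCosh_le_cosh hR ?_
  calc hCosh u v ≤ cosh r ^ 2 + cos (2 * θ) * sinh r ^ 2 :=
        hCosh_le_cosh_sq_add_mul_sinh_sq hu₀ hv₀ hu hv
          (cos_nonneg_of_mem_Icc ⟨by linarith, by linarith⟩)
          (cos_le_cos_of_le_abs_of_abs_le_two_pi_sub (by linarith) hangle₁ hangle₂)
    _ = cos θ ^ 2 * cosh (2 * r) + sin θ ^ 2 := cosh_sq_add_cos_two_mul_mul_sinh_sq r θ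
    _ ≤ cosh R := by
        rw [hr, mul_div_cancel₀ _ (by positivity)]
        nlinarith [sin_sq_add_cos_sq θ]

theorem hyperbolic_sector_distances_general (R : ℝ) (hR : 0 < R) (k : ℕ) (hk : 4 ≤ k)
    (θ₀ r₁ r₂ : ℝ) (hθ₀ : θ₀ = π / (3 * k))
    (hr₁0 : 0 ≤ r₁)
    (hr₁ : Real.cosh (2 * r₁) = Real.cosh R / Real.cos (θ₀ / 2) ^ 2)
    (hr₂ : Real.cosh (2 * r₂) = (Real.cosh R - 1) / Real.cos θ₀ ^ 2)
    (i j : ℕ) (hik : i ≤ k) (hj1 : 1 ≤ j) (hjk : j ≤ 2 * k)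
    (v w : ℝ × ℝ) (hv : v ∈ hSector r₁ r₂ θ₀ i) (hw : w ∈ hSector r₁ r₂ θ₀ j) :
    (j = i + k → R < hDist v w) ∧ (j ≠ i + k → hDist v w ≤ R) := by
  have hk' : (4 : ℝ) ≤ k := by exact_mod_cast hk
  have hθ₀pos : 0 < θ₀ := by rw [hθ₀]; positivity
  have hπ : π = 3 * k * θ₀ := by rw [hθ₀]; field_simp
  have hθ₀π : θ₀ ≤ π / 12 := by rw [hπ]; nlinarith
  have hangle : |v.2 - w.2 + π - 3 * ((i + k - j : ℤ) : ℝ) * θ₀| ≤ θ₀ := by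
    convert abs_sub_sub_le_of_mem_hSector hv hw using 2
    push_cast
    rw [hπ]
    ring
  constructor
  · rintro rfl
    exact lt_hDist_of_abs_add_pi_le hR.le hθ₀pos (by linarith) hr₁0 hr₁ hv.1 hw.1
      (by simpa using hangle)
  · intro hj
    have hm : |(i + k - j : ℤ)| ≤ 2 * k - 1 := abs_le.2 ⟨by omega, by omega⟩
    obtain ⟨hangle₁, hangle₂⟩ := two_mul_le_abs_and_abs_le_of_abs_sub_int_mul_le
      (M := 2 * k - 1) (by omega) (by exact_mod_cast hm) hθ₀pos.le hangle
    have hM : (3 * (2 * k - 1 : ℝ) + 1) * θ₀ = 2 * π - 2 * θ₀ := by rw [hπ]; ring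
    exact hDist_le_of_le_abs_add_pi hR.le hθ₀pos.le (by linarith) hr₂ (hr₁0.trans hv.1)
      (hr₁0.trans hw.1) hv.2.1 hw.2.1 hangle₁ (hM ▸ hangle₂)

/-- For `R > 0`, `k ≥ 4`, `θ₀ = π/(3k)` and `0 ≤ r₁ < r₂ ≤ R` defined by
`cosh(2r₁) = cosh R / cos²(θ₀/2)` and `cosh(2r₂) = (cosh R − 1)/cos²(θ₀)`: any
`v ∈ U_i` (`1 ≤ i ≤ k`) and `w ∈ U_j` (`1 ≤ j ≤ 2k`) satisfy `d(v,w) > R` if `j = i + k`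
and `d(v,w) ≤ R` otherwise. -/
theorem hyperbolic_sector_distances (R : ℝ) (hR : 0 < R) (k : ℕ) (hk : 4 ≤ k)
    (θ₀ r₁ r₂ : ℝ) (hθ₀ : θ₀ = π / (3 * k))
    (hr₁0 : 0 ≤ r₁)
    (hr₁ : Real.cosh (2 * r₁) = Real.cosh R / Real.cos (θ₀ / 2) ^ 2)
    (hr₂ : Real.cosh (2 * r₂) = (Real.cosh R - 1) / Real.cos θ₀ ^ 2)
    (h12 : r₁ < r₂) (h2R : r₂ ≤ R)
    (i j : ℕ) (hi1 : 1 ≤ i) (hik : i ≤ k) (hj1 : 1 ≤ j) (hjk : j ≤ 2 * k)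
    (v w : ℝ × ℝ) (hv : v ∈ hSector r₁ r₂ θ₀ i) (hw : w ∈ hSector r₁ r₂ θ₀ j) :
    (j = i + k → R < hDist v w) ∧ (j ≠ i + k → hDist v w ≤ R) :=
  hyperbolic_sector_distances_general R hR k hk θ₀ r₁ r₂ hθ₀ hr₁0 hr₁ hr₂ i j hik hj1 hjk v w hv hw
end
end

section
/- Fix γ ∈ (2,3), C ∈ ℝ; set α = (γ−1)/2 and, for each n, R = 2 log n + C. Define r_1, r_2 by cosh(2r_1) = cosh(R)/cos^2(θ_0/2) and cosh(2r_2) = (cosh(R) − 1)/cos^2(θ_0), and let U_1 = {(r,φ): r_1 ≤ r ≤ r_2, 0 ≤ φ ≤ θ_0}. Let F(U_1) = ∫_{U_1} f(r,φ) dr dφ where f(r,φ) = (1/(2π))·α sinh(αr)/(cosh(αR) − 1) for 0 ≤ r ≤ R. Then there exist constants c > 0, θ* > 0 and n_0 such that for all n ≥ n_0 and all θ_0 with 1/√n < θ_0 < θ*, one has F(U_1) ≥ c·n^{−α}·θ_0^3. -/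
open Real MeasureTheory intervalIntegral

noncomputable section

/-- The density (in the radial coordinate) of a vertex of the hyperbolic random graph:
`f(r) = (1/(2π))·α sinh(αr)/(cosh(αR) − 1)` for `0 ≤ r ≤ R` and `0` otherwise. -/
def radialDensity (α R r : ℝ) : ℝ :=
  if 0 ≤ r ∧ r ≤ R then (1 / (2 * π)) * α * Real.sinh (α * r) / (Real.cosh (α * R) - 1)
  else 0

/-!
The defining equations of `r₁, r₂` give
`cosh (2 r₂) - cosh (2 r₁) = cosh R (1 / cos² θ₀ - 1 / cos² (θ₀/2)) - 1 / cos² θ₀`,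
and `1 / cos² θ - 1 / cos² (θ/2) ≥ 1 - cos θ ≥ 2θ²/π²`; once `cosh R · θ₀² ≫ 1`, which is what
`θ₀ > 1/√n` buys, this difference is of order `cosh R · θ₀²`. Since `cosh (2 r₂) ≤ 2 cosh R`, the
mean value theorem turns it into `r₂ - r₁ ≳ θ₀²`. The annulus lies in `[(R - log 2)/2, R]`, where
the density is `≳ e^{α R / 2} / e^{α R}`, so its mass is `≳ θ₀ · θ₀² · e^{-α R / 2} ≍ θ₀³ n^{-α}`.
-/

namespace Real

lemma sinh_mul_sub_le_cosh_sub_cosh {a b : ℝ} (hab : a ≤ b) :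
    sinh a * (b - a) ≤ cosh b - cosh a :=
  (convex_Icc a b).mul_sub_le_image_sub_of_le_deriv continuous_cosh.continuousOn
    differentiable_cosh.differentiableOn
    (fun x hx => by rw [deriv_cosh]; exact sinh_le_sinh.2 (interior_subset hx).1)
    a (Set.left_mem_Icc.2 hab) b (Set.right_mem_Icc.2 hab) hab

lemma cosh_sub_cosh_le_sinh_mul_sub {a b : ℝ} (hab : a ≤ b) :
    cosh b - cosh a ≤ sinh b * (b - a) :=
  (convex_Icc a b).image_sub_le_mul_sub_of_deriv_le continuous_cosh.continuousOn
    differentiable_cosh.differentiableOn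
    (fun x hx => by rw [deriv_cosh]; exact sinh_le_sinh.2 (interior_subset hx).2)
    a (Set.left_mem_Icc.2 hab) b (Set.right_mem_Icc.2 hab) hab

lemma exp_div_two_le_cosh (x : ℝ) : exp x / 2 ≤ cosh x := by
  rw [cosh_eq]
  linarith [exp_pos (-x)]

lemma cosh_le_exp {x : ℝ} (hx : 0 ≤ x) : cosh x ≤ exp x := by
  rw [cosh_eq]
  linarith [exp_le_exp.2 (neg_le_self hx)]

lemma exp_div_four_le_sinh {x : ℝ} (hx : log 2 ≤ 2 * x) : exp x / 4 ≤ sinh x := by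
  have h2 : 2 ≤ exp x * exp x := by
    rw [← exp_add, ← two_mul]
    exact (exp_log two_pos).ge.trans (exp_le_exp.2 hx)
  have hinv : exp (-x) * exp x = 1 := by rw [← exp_add, neg_add_cancel, exp_zero]
  rw [sinh_eq]
  nlinarith [exp_pos x, exp_pos (-x)]

lemma integral_sinh_mul {α : ℝ} (hα : α ≠ 0) (a b : ℝ) :
    ∫ r in a..b, sinh (α * r) = (cosh (α * b) - cosh (α * a)) / α := by
  rw [integral_comp_mul_left sinh hα,
    integral_deriv_eq_sub' cosh deriv_cosh (fun x _ => differentiable_cosh x)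
      continuous_sinh.continuousOn, smul_eq_mul, inv_mul_eq_div]

lemma sqrt_two_div_two_le_cos {θ : ℝ} (hθ : |θ| ≤ π / 4) : √2 / 2 ≤ cos θ := by
  rw [← cos_pi_div_four, ← cos_abs θ]
  exact cos_le_cos_of_nonneg_of_le_pi (abs_nonneg θ) (by linarith [pi_pos]) hθ

lemma half_le_cos_sq {θ : ℝ} (hθ : |θ| ≤ π / 4) : 1 / 2 ≤ cos θ ^ 2 := by
  have h := sqrt_two_div_two_le_cos hθ
  nlinarith [sq_sqrt (zero_le_two : (0 : ℝ) ≤ 2), sqrt_nonneg 2]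

lemma one_sub_cos_le_inv_cos_sq_sub_inv_cos_half_sq {θ : ℝ} (hθ : 0 < cos θ) :
    1 - cos θ ≤ 1 / cos θ ^ 2 - 1 / cos (θ / 2) ^ 2 := by
  have hhalf : cos (θ / 2) ^ 2 = (1 + cos θ) / 2 := by
    rw [cos_sq, mul_div_cancel₀ θ two_ne_zero]
    ring
  have hc := cos_le_one θ
  rw [hhalf, ← sub_nonneg]
  have hfactor : 1 / cos θ ^ 2 - 1 / ((1 + cos θ) / 2) - (1 - cos θ)
      = (1 - cos θ) * (1 + 2 * cos θ - cos θ ^ 2 * (1 + cos θ)) / (cos θ ^ 2 * (1 + cos θ)) := by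
    field_simp
    ring
  rw [hfactor]
  exact div_nonneg (mul_nonneg (by linarith) (by nlinarith)) (by positivity)

end Real

lemma mul_sq_div_pi_sq_le_div_cos_sq_sub_div_cos_half_sq {X θ : ℝ} (hθ : |θ| ≤ π / 4)
    (hX : 2 * π ^ 2 ≤ X * θ ^ 2) :
    X * θ ^ 2 / π ^ 2 ≤ (X - 1) / cos θ ^ 2 - X / cos (θ / 2) ^ 2 := by
  have hπ : 0 < π ^ 2 := by positivity
  have hcos : 0 < cos θ := (by positivity : (0 : ℝ) < √2 / 2).trans_le (sqrt_two_div_two_le_cos hθ)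
  have hX0 : 0 ≤ X := by nlinarith [sq_nonneg θ]
  have hjordan : 2 / π ^ 2 * θ ^ 2 ≤ 1 - cos θ := by
    linarith [cos_le_one_sub_mul_cos_sq (hθ.trans (by linarith [pi_pos]))]
  have hinv : 1 / cos θ ^ 2 ≤ 2 := by
    rw [div_le_iff₀ (by positivity)]
    linarith [half_le_cos_sq hθ]
  have hmain : X * (2 / π ^ 2 * θ ^ 2) ≤ X * (1 / cos θ ^ 2 - 1 / cos (θ / 2) ^ 2) :=
    mul_le_mul_of_nonneg_left
      (hjordan.trans (one_sub_cos_le_inv_cos_sq_sub_inv_cos_half_sq hcos)) hX0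
  have hlarge : 2 ≤ X * θ ^ 2 / π ^ 2 := by rwa [le_div_iff₀ hπ]
  have hsplit : (X - 1) / cos θ ^ 2 - X / cos (θ / 2) ^ 2
      = X * (1 / cos θ ^ 2 - 1 / cos (θ / 2) ^ 2) - 1 / cos θ ^ 2 := by ring
  have hdouble : X * (2 / π ^ 2 * θ ^ 2) = 2 * (X * θ ^ 2 / π ^ 2) := by ring
  linarith

lemma sub_div_cos_sq_le_two_mul {X θ : ℝ} (hθ : |θ| ≤ π / 4) (hX : 0 ≤ X) :
    (X - 1) / cos θ ^ 2 ≤ 2 * X := by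
  have h := half_le_cos_sq hθ
  rw [div_le_iff₀ (by linarith)]
  nlinarith

lemma le_of_cosh_two_mul_le_two_mul_cosh {r R : ℝ} (hR : 0 ≤ R) (hR₂ : 2 ≤ cosh R)
    (h : cosh (2 * r) ≤ 2 * cosh R) : r ≤ R := by
  have hcosh : cosh (2 * r) ≤ cosh (2 * R) := by
    rw [cosh_two_mul R]
    nlinarith [cosh_sq R]
  have habs := cosh_le_cosh.1 hcosh
  rw [abs_of_nonneg (by linarith : 0 ≤ 2 * R)] at habs
  linarith [le_abs_self (2 * r)]

lemma sub_log_two_le_of_cosh_le_cosh {R s : ℝ} (hs : 0 ≤ s) (h : cosh R ≤ cosh s) :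
    R - log 2 ≤ s := by
  rw [sub_le_iff_le_add, ← exp_le_exp, exp_add, exp_log two_pos]
  linarith [exp_div_two_le_cosh R, cosh_le_exp hs]

lemma sq_div_four_pi_sq_le_sub_of_cosh_two_mul_eq {R θ r₁ r₂ : ℝ} (hθ : |θ| ≤ π / 4)
    (hr₁ : 0 ≤ r₁) (hr₂ : 0 ≤ r₂) (hX : 2 * π ^ 2 ≤ cosh R * θ ^ 2)
    (h₁ : cosh (2 * r₁) = cosh R / cos (θ / 2) ^ 2)
    (h₂ : cosh (2 * r₂) = (cosh R - 1) / cos θ ^ 2) :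
    θ ^ 2 / (4 * π ^ 2) ≤ r₂ - r₁ := by
  have hπ : 0 < π ^ 2 := by positivity
  have hXpos := cosh_pos R
  have hgap := mul_sq_div_pi_sq_le_div_cos_sq_sub_div_cos_half_sq hθ hX
  rw [← h₁, ← h₂] at hgap
  have hpos : 0 < cosh R * θ ^ 2 / π ^ 2 := div_pos (by linarith) hπ
  have hlt : r₁ < r₂ := by
    have habs := cosh_lt_cosh.1 (by linarith : cosh (2 * r₁) < cosh (2 * r₂))
    rw [abs_of_nonneg (by linarith), abs_of_nonneg (by linarith)] at habs
    linarith
  have hmvt := cosh_sub_cosh_le_sinh_mul_sub (by linarith : 2 * r₁ ≤ 2 * r₂)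
  have hsinh : sinh (2 * r₂) ≤ 2 * cosh R :=
    (sinh_lt_cosh _).le.trans (h₂ ▸ sub_div_cos_sq_le_two_mul hθ hXpos.le)
  have hstep : cosh R * θ ^ 2 / π ^ 2 ≤ cosh R * (4 * (r₂ - r₁)) := by
    nlinarith [mul_le_mul_of_nonneg_right hsinh (by linarith : 0 ≤ 2 * r₂ - 2 * r₁)]
  rw [div_le_iff₀ (by positivity)]
  rw [div_le_iff₀ hπ] at hstep
  nlinarith

lemma integral_radialDensity {α R a b : ℝ} (hα : α ≠ 0) (ha : 0 ≤ a) (hab : a ≤ b)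
    (hb : b ≤ R) :
    ∫ r in a..b, radialDensity α R r
      = (cosh (α * b) - cosh (α * a)) / (2 * π * (cosh (α * R) - 1)) := by
  have hEq : Set.EqOn (radialDensity α R)
      (fun r => 1 / (2 * π) * α / (cosh (α * R) - 1) * sinh (α * r)) (Set.uIcc a b) := by
    intro r hr
    rw [Set.uIcc_of_le hab] at hr
    rw [radialDensity, if_pos ⟨ha.trans hr.1, hr.2.trans hb⟩]
    ring
  rw [integral_congr hEq, intervalIntegral.integral_const_mul, integral_sinh_mul hα]
  field_simp

lemma mul_sinh_mul_sub_div_le_integral_radialDensity {α R a b : ℝ} (hα : 0 < α) (hR : 0 < R)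
    (ha : 0 ≤ a) (hab : a ≤ b) (hb : b ≤ R) :
    α * sinh (α * a) * (b - a) / (2 * π * exp (α * R)) ≤ ∫ r in a..b, radialDensity α R r := by
  rw [integral_radialDensity hα.ne' ha hab hb]
  have hden : 0 < cosh (α * R) - 1 := sub_pos.2 (one_lt_cosh.2 (mul_pos hα hR).ne')
  have hsinh : 0 ≤ sinh (α * a) := sinh_nonneg_iff.2 (mul_nonneg hα.le ha)
  have hnum : α * sinh (α * a) * (b - a) ≤ cosh (α * b) - cosh (α * a) := by
    have h := sinh_mul_sub_le_cosh_sub_cosh (mul_le_mul_of_nonneg_left hab hα.le)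
    linarith [show α * sinh (α * a) * (b - a) = sinh (α * a) * (α * b - α * a) by ring]
  apply div_le_div₀ ((mul_nonneg (mul_nonneg hα.le hsinh) (sub_nonneg.2 hab)).trans hnum) hnum
    (by positivity)
  gcongr
  linarith [cosh_le_exp (mul_pos hα hR).le]

lemma two_mul_pi_sq_le_cosh_two_mul_log_add_mul_sq {n C θ : ℝ} (hn : 4 * π ^ 2 * exp (-C) < n)
    (hθ : 1 / √n < θ) :
    2 * π ^ 2 ≤ cosh (2 * log n + C) * θ ^ 2 := by
  have hn0 : 0 < n := lt_of_le_of_lt (by positivity) hn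
  have hθsq : 1 / n ≤ θ ^ 2 := by
    have h := pow_le_pow_left₀ (by positivity) hθ.le 2
    rwa [div_pow, one_pow, sq_sqrt hn0.le] at h
  have hcosh : exp C * n ^ 2 / 2 ≤ cosh (2 * log n + C) := by
    have hexp : exp (2 * log n + C) = exp C * n ^ 2 := by
      rw [show 2 * log n + C = log n + log n + C by ring, exp_add, exp_add, exp_log hn0]
      ring
    simpa only [hexp] using exp_div_two_le_cosh (2 * log n + C)
  have hn' : 4 * π ^ 2 ≤ exp C * n := by
    have h := mul_le_mul_of_nonneg_left hn.le (exp_pos C).le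
    rwa [mul_left_comm, ← exp_add, add_neg_cancel, exp_zero, mul_one] at h
  calc 2 * π ^ 2 ≤ exp C * n ^ 2 / 2 * (1 / n) := by
        rw [show exp C * n ^ 2 / 2 * (1 / n) = exp C * n / 2 by field_simp]
        linarith
    _ ≤ cosh (2 * log n + C) * θ ^ 2 := mul_le_mul hcosh hθsq (by positivity) (cosh_pos _).le

lemma le_integral_integral_radialDensity {α R θ r₁ r₂ : ℝ} (hα : 1 / 2 < α) (hR : 3 ≤ R)
    (hθ : 0 < θ) (hθπ : θ ≤ π / 4) (hX : 2 * π ^ 2 ≤ cosh R * θ ^ 2) (hr₁ : 0 ≤ r₁) (hr₂ : 0 ≤ r₂)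
    (h₁ : cosh (2 * r₁) = cosh R / cos (θ / 2) ^ 2)
    (h₂ : cosh (2 * r₂) = (cosh R - 1) / cos θ ^ 2) :
    α * exp (-(α * (R + log 2)) / 2) / (32 * π ^ 3) * θ ^ 3 ≤
      ∫ _φ in (0 : ℝ)..θ, ∫ r in r₁..r₂, radialDensity α R r := by
  have hθabs : |θ| ≤ π / 4 := by rwa [abs_of_pos hθ]
  have hθhalf : |θ / 2| ≤ π / 4 := by rw [abs_of_pos (by positivity)]; linarith
  have hr₂R : r₂ ≤ R := le_of_cosh_two_mul_le_two_mul_cosh (by linarith)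
    (by linarith [exp_div_two_le_cosh R, add_one_le_exp R])
    (h₂ ▸ sub_div_cos_sq_le_two_mul hθabs (cosh_pos R).le)
  have hr₁R : R - log 2 ≤ 2 * r₁ := sub_log_two_le_of_cosh_le_cosh (by linarith)
    (h₁ ▸ le_div_self (cosh_pos R).le (by linarith [half_le_cos_sq hθhalf]) (cos_sq_le_one _))
  have hgap := sq_div_four_pi_sq_le_sub_of_cosh_two_mul_eq hθabs hr₁ hr₂ hX h₁ h₂
  have hsinh : exp (α * (R - log 2) / 2) / 4 ≤ sinh (α * r₁) := by
    have hlog := log_two_lt_d9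
    refine le_trans ?_ (exp_div_four_le_sinh (by nlinarith))
    gcongr
    nlinarith
  have hexp : exp (-(α * (R + log 2)) / 2) = exp (α * (R - log 2) / 2) / exp (α * R) := by
    rw [← exp_sub]
    ring_nf
  rw [intervalIntegral.integral_const, smul_eq_mul, sub_zero, hexp]
  calc α * (exp (α * (R - log 2) / 2) / exp (α * R)) / (32 * π ^ 3) * θ ^ 3
      = θ * (α * (exp (α * (R - log 2) / 2) / 4) * (θ ^ 2 / (4 * π ^ 2))
          / (2 * π * exp (α * R))) := by
        field_simp
        ring
    _ ≤ θ * (α * sinh (α * r₁) * (r₂ - r₁) / (2 * π * exp (α * R))) := by gcongr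
    _ ≤ θ * ∫ r in r₁..r₂, radialDensity α R r := by
        gcongr
        have hsq : 0 ≤ θ ^ 2 / (4 * π ^ 2) := by positivity
        exact mul_sinh_mul_sub_div_le_integral_radialDensity (by linarith) (by linarith) hr₁
          (by linarith) hr₂R

/-- For `γ ∈ (2,3)`, `C ∈ ℝ`, `α = (γ−1)/2` and `R = 2 log n + C`: there are `c > 0`,
`θ* > 0` and `n₀` such that for all `n ≥ n₀` and all `θ₀` with `1/√n < θ₀ < θ*`, the
probability mass `F(U₁) = ∫_{0}^{θ₀} ∫_{r₁}^{r₂} f(r) dr dφ` of the hyperbolic annular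
sector `U₁` (where `cosh(2r₁) = cosh R / cos²(θ₀/2)` and
`cosh(2r₂) = (cosh R − 1)/cos² θ₀`) is at least `c·n^{−α}·θ₀³`. -/
theorem hyperbolic_sector_mass_lower_bound (γ C : ℝ) (hγ : γ ∈ Set.Ioo (2 : ℝ) 3) :
    ∃ c : ℝ, 0 < c ∧ ∃ θstar : ℝ, 0 < θstar ∧ ∃ n₀ : ℕ, ∀ n : ℕ, n₀ ≤ n →
      ∀ θ₀ : ℝ, 1 / Real.sqrt n < θ₀ → θ₀ < θstar →
        ∀ r₁ r₂ : ℝ, 0 ≤ r₁ → 0 ≤ r₂ →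
          Real.cosh (2 * r₁) =
              Real.cosh (2 * Real.log n + C) / Real.cos (θ₀ / 2) ^ 2 →
          Real.cosh (2 * r₂) =
              (Real.cosh (2 * Real.log n + C) - 1) / Real.cos θ₀ ^ 2 →
          c * (n : ℝ) ^ (-((γ - 1) / 2)) * θ₀ ^ 3 ≤
            ∫ _φ in (0 : ℝ)..θ₀, ∫ r in r₁..r₂,
              radialDensity ((γ - 1) / 2) (2 * Real.log n + C) r := by
  obtain ⟨hγ, -⟩ := hγ
  refine ⟨(γ - 1) / 2 * exp (-((γ - 1) / 2 * (C + log 2)) / 2) / (32 * π ^ 3),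
    div_pos (mul_pos (by linarith) (exp_pos _)) (by positivity), π / 4, by positivity, ?_⟩
  obtain ⟨n₀, hn₀⟩ := exists_nat_gt (max (4 * π ^ 2 * exp (-C)) (exp ((3 - C) / 2)))
  refine ⟨n₀, fun n hn θ₀ hθ₁ hθ₂ r₁ r₂ hr₁ hr₂ h₁ h₂ => ?_⟩
  obtain ⟨hnπ, hnR⟩ := max_lt_iff.1 (hn₀.trans_le (Nat.cast_le.2 hn))
  have hn0 : (0 : ℝ) < n := (exp_pos _).trans hnR
  have hR : 3 ≤ 2 * log n + C := by linarith [(le_log_iff_exp_le hn0).2 hnR.le]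
  have hθ : 0 < θ₀ := (by positivity : (0 : ℝ) ≤ 1 / √n).trans_lt hθ₁
  convert le_integral_integral_radialDensity (by linarith : 1 / 2 < (γ - 1) / 2) hR hθ hθ₂.le
    (two_mul_pi_sq_le_cosh_two_mul_log_add_mul_sq hnπ hθ₁) hr₁ hr₂ h₁ h₂ using 2
  rw [rpow_def_of_pos hn0, div_mul_eq_mul_div, mul_assoc, ← exp_add]
  ring_nf
end
end
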